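/- arXiv:2106.09142 — 10 statements merged into one kernel-verified Lean document; each statement's English description precedes it below -/
import Mathlib

section
/- Irreducibility of the volleyball chain: the submonoid of Equiv.Perm (Fin 24) generated by the step set S is everything, i.e. Submonoid.closure S = ⊤. Equivalently, every permutation of the 24 positions is the composite gₙ ∘ ⋯ ∘ g₁ of some finite word g₁,…,gₙ of elements of S. -/
/-!
The group generated by `S` contains `E` and hence each rotation `r = E⁻¹ (E r)`.
In that group, `E rD rC rB rA` is a 24-cycle sending `5 ↦ 15`, and the fifth power of
`rB² E rB E² rC² E` is the transposition `(5 15)`. A full cycle together with the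
transposition of two consecutive points of it generates the symmetric group, and in a
finite group the submonoid generated by a set is already the subgroup it generates.
-/

set_option maxRecDepth 10000

namespace Volleyball

/-- Rotation of quadrant A: the 6-cycle (0 1 2 8 7 6). -/
def rA : Equiv.Perm (Fin 24) := ([0,1,2,8,7,6] : List (Fin 24)).formPerm
/-- Rotation of quadrant B: the 6-cycle (3 4 5 11 10 9). -/
def rB : Equiv.Perm (Fin 24) := ([3,4,5,11,10,9] : List (Fin 24)).formPerm
/-- Rotation of quadrant C: the 6-cycle (12 13 14 20 19 18). -/
def rC : Equiv.Perm (Fin 24) := ([12,13,14,20,19,18] : List (Fin 24)).formPerm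
/-- Rotation of quadrant D: the 6-cycle (15 16 17 23 22 21). -/
def rD : Equiv.Perm (Fin 24) := ([15,16,17,23,22,21] : List (Fin 24)).formPerm

/-- The migration E = (6 9 17 14)(7 10 16 13)(8 11 15 12). -/
def E : Equiv.Perm (Fin 24) :=
  ([6,9,17,14] : List (Fin 24)).formPerm *
  ([7,10,16,13] : List (Fin 24)).formPerm *
  ([8,11,15,12] : List (Fin 24)).formPerm

/-- The step set of the volleyball chain. -/
def S : Set (Equiv.Perm (Fin 24)) :=
  { g | ∃ x₁ x₂ x₃ x₄ : Fin 6,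
      (((x₁ : ℕ) : ZMod 6) - ((x₂ : ℕ) : ZMod 6) = -1 ∨
       ((x₁ : ℕ) : ZMod 6) - ((x₂ : ℕ) : ZMod 6) = 0 ∨
       ((x₁ : ℕ) : ZMod 6) - ((x₂ : ℕ) : ZMod 6) = 1) ∧
      (((x₃ : ℕ) : ZMod 6) - ((x₄ : ℕ) : ZMod 6) = -1 ∨
       ((x₃ : ℕ) : ZMod 6) - ((x₄ : ℕ) : ZMod 6) = 0 ∨
       ((x₃ : ℕ) : ZMod 6) - ((x₄ : ℕ) : ZMod 6) = 1) ∧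
      g = E * rA ^ (x₁ : ℕ) * rC ^ (x₂ : ℕ) * rB ^ (x₃ : ℕ) * rD ^ (x₄ : ℕ) }

theorem exists_list_reverse_prod_eq_of_closure_eq_top {M : Type*} [Monoid M] {s : Set M}
    (h : Submonoid.closure s = ⊤) (x : M) :
    ∃ l : List M, (∀ g ∈ l, g ∈ s) ∧ l.reverse.prod = x := by
  obtain ⟨l, hl, rfl⟩ := Submonoid.exists_list_of_mem_closure (h ▸ Submonoid.mem_top x)
  exact ⟨l.reverse, fun g hg => hl g (List.mem_reverse.mp hg), by rw [List.reverse_reverse]⟩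

def tour : Equiv.Perm (Fin 24) := E * rD * rC * rB * rA

theorem tour_eq_formPerm : tour =
    ([0,1,2,11,16,14,20,19,18,8,10,17,23,22,21,12,7,9,3,4,5,15,13,6] : List (Fin 24)).formPerm := by
  ext i; fin_cases i <;> rfl

theorem tour_isCycle : tour.IsCycle := by
  rw [tour_eq_formPerm]; exact List.isCycle_formPerm (by decide) (by decide)

theorem support_tour : tour.support = Finset.univ := by
  rw [tour_eq_formPerm, List.support_formPerm_of_nodup _ (by decide) (by decide)]; decide

-- The word is `(5 15)(3 11 9 4 10)(16 20 18 17 19)`, a product of commuting factors.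
theorem pow_five_eq_swap : (rB * rB * E * rB * E * E * rC * rC * E) ^ 5 = Equiv.swap 5 15 := by
  ext i; fin_cases i <;> rfl

theorem closure_generators_eq_top : Subgroup.closure {E, rA, rB, rC, rD} = ⊤ := by
  set H := Subgroup.closure {E, rA, rB, rC, rD}
  have hE : E ∈ H := Subgroup.subset_closure (by simp)
  have hA : rA ∈ H := Subgroup.subset_closure (by simp)
  have hB : rB ∈ H := Subgroup.subset_closure (by simp)
  have hC : rC ∈ H := Subgroup.subset_closure (by simp)
  have hD : rD ∈ H := Subgroup.subset_closure (by simp)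
  have tour_five : tour 5 = 15 := rfl
  rw [eq_top_iff, ← Equiv.Perm.closure_cycle_adjacent_swap tour_isCycle support_tour 5,
    Subgroup.closure_le, tour_five, ← pow_five_eq_swap]
  rintro _ (rfl | rfl)
  · exact mul_mem (mul_mem (mul_mem (mul_mem hE hD) hC) hB) hA
  · refine pow_mem ?_ 5
    exact mul_mem (mul_mem (mul_mem (mul_mem (mul_mem (mul_mem (mul_mem (mul_mem
      hB hB) hE) hB) hE) hE) hC) hC) hE

theorem E_mem_S : E ∈ S := ⟨0, 0, 0, 0, by decide, by decide, by simp⟩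
theorem E_mul_rA_mem_S : E * rA ∈ S := ⟨1, 0, 0, 0, by decide, by decide, by simp⟩
theorem E_mul_rB_mem_S : E * rB ∈ S := ⟨0, 0, 1, 0, by decide, by decide, by simp⟩
theorem E_mul_rC_mem_S : E * rC ∈ S := ⟨0, 1, 0, 0, by decide, by decide, by simp⟩
theorem E_mul_rD_mem_S : E * rD ∈ S := ⟨0, 0, 0, 1, by decide, by decide, by simp⟩

theorem subgroup_closure_S_eq_top : Subgroup.closure S = ⊤ := by
  have of_E_mul {g} (hg : E * g ∈ S) : g ∈ Subgroup.closure S := by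
    simpa using mul_mem (inv_mem (Subgroup.subset_closure E_mem_S)) (Subgroup.subset_closure hg)
  rw [eq_top_iff, ← closure_generators_eq_top, Subgroup.closure_le]
  rintro g (rfl | rfl | rfl | rfl | rfl)
  exacts [Subgroup.subset_closure E_mem_S, of_E_mul E_mul_rA_mem_S, of_E_mul E_mul_rB_mem_S,
    of_E_mul E_mul_rC_mem_S, of_E_mul E_mul_rD_mem_S]

/-- Irreducibility: the submonoid generated by the step set S is everything;
equivalently every permutation is the composite gₙ ∘ ⋯ ∘ g₁ of a word in S. -/
theorem irreducible :
    Submonoid.closure S = ⊤ ∧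
    ∀ σ : Equiv.Perm (Fin 24), ∃ l : List (Equiv.Perm (Fin 24)),
      (∀ g ∈ l, g ∈ S) ∧ l.reverse.prod = σ := by
  have h : Submonoid.closure S = ⊤ := by
    rw [← Subgroup.closure_toSubmonoid_of_finite, subgroup_closure_S_eq_top,
      Subgroup.top_toSubmonoid]
  exact ⟨h, exists_list_reverse_prod_eq_of_closure_eq_top h⟩

end Volleyball
end

section
/- Each single-quadrant rotation can be realized by the chain while fixing all other players: for each Q ∈ {A, B, C, D} there is a word of length 4 in S whose composite is r_Q (for example, for Q = B the word E∘r_B, E, E, E, whose composite is E⁴ ∘ r_B = r_B). In particular r_A, r_B, r_C, r_D and all their powers belong to Submonoid.closure S. -/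
namespace Volleyball

theorem prod_reverse_mul_cons_replicate {M : Type*} [Monoid M] (e r : M) (n : ℕ) :
    ((e * r) :: List.replicate n e).reverse.prod = e ^ (n + 1) * r := by
  rw [List.reverse_cons, List.reverse_replicate, List.prod_append, List.prod_replicate,
    List.prod_singleton, pow_succ, mul_assoc]

theorem exists_word_of_pow_eq_one {M : Type*} [Monoid M] {T : Set M} {e r : M} {n : ℕ}
    (he : e ∈ T) (her : e * r ∈ T) (hn : e ^ (n + 1) = 1) :
    ∃ l : List M, (∀ g ∈ l, g ∈ T) ∧ l.length = n + 1 ∧ l.reverse.prod = r := by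
  refine ⟨(e * r) :: List.replicate n e, ?_, by simp, ?_⟩
  · rintro g (_ | ⟨_, hg⟩)
    · exact her
    · rwa [List.eq_of_mem_replicate hg]
  · rw [prod_reverse_mul_cons_replicate, hn, one_mul]

theorem mem_closure_of_reverse_prod {M : Type*} [Monoid M] {T : Set M} {l : List M}
    (hl : ∀ g ∈ l, g ∈ T) : l.reverse.prod ∈ Submonoid.closure T :=
  Submonoid.list_prod_mem _ fun g hg => Submonoid.subset_closure (hl g (List.mem_reverse.mp hg))

set_option maxRecDepth 10000 in
theorem E_pow_four : E ^ 4 = 1 := by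
  decide

/-- A single quadrant may turn once while its partner stays put, since the
exponents of partners need only differ by at most one. -/
theorem E_mul_mem_S {r : Equiv.Perm (Fin 24)} (hr : r ∈ ({rA, rB, rC, rD} : Set _)) :
    E * r ∈ S := by
  rcases hr with rfl | rfl | rfl | rfl
  · exact ⟨1, 0, 0, 0, by decide, by decide, by simp⟩
  · exact ⟨0, 0, 1, 0, by decide, by decide, by simp⟩
  · exact ⟨0, 1, 0, 0, by decide, by decide, by simp⟩
  · exact ⟨0, 0, 0, 1, by decide, by decide, by simp⟩

/-- Each single-quadrant rotation is realized by a word of length 4 in S, and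
all powers of the rotations lie in the closure of S. -/
theorem rotations_realizable :
    (∀ r ∈ ({rA, rB, rC, rD} : Set (Equiv.Perm (Fin 24))),
      ∃ l : List (Equiv.Perm (Fin 24)),
        (∀ g ∈ l, g ∈ S) ∧ l.length = 4 ∧ l.reverse.prod = r) ∧
    (∀ r ∈ ({rA, rB, rC, rD} : Set (Equiv.Perm (Fin 24))),
      ∀ n : ℕ, r ^ n ∈ Submonoid.closure S) := by
  have words : ∀ r ∈ ({rA, rB, rC, rD} : Set (Equiv.Perm (Fin 24))),
      ∃ l : List (Equiv.Perm (Fin 24)),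
        (∀ g ∈ l, g ∈ S) ∧ l.length = 4 ∧ l.reverse.prod = r :=
    fun _ hr => exists_word_of_pow_eq_one E_mem_S (E_mul_mem_S hr) E_pow_four
  refine ⟨words, fun r hr n => pow_mem ?_ n⟩
  obtain ⟨l, hl, -, rfl⟩ := words r hr
  exact mem_closure_of_reverse_prod hl

end Volleyball
end

section
/- The transposition sequence F: there is a word of length 68 in S whose composite is the transposition Equiv.swap 0 1 (swapping the two adjacent back-row positions 0 and 1 of quadrant A and fixing all other positions); in particular Equiv.swap 0 1 ∈ Submonoid.closure S. -/
namespace Volleyball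

/-! Twelve steps of `S` already compose to the transposition `(0 1)`, which is a finite
computation in `Equiv.Perm (Fin 24)`. The step with all exponents zero is the migration `E`, a
product of three disjoint 4-cycles; appending `56 = 4 * 14` copies of it pads the word to
length 68 without changing its composite. -/

theorem _root_.List.prod_reverse_append_replicate {M : Type*} [Monoid M] (l : List M) {g : M}
    {n : ℕ} (hg : g ^ n = 1) (k : ℕ) :
    (l ++ List.replicate (n * k) g).reverse.prod = l.reverse.prod := by
  rw [List.reverse_append, List.reverse_replicate, List.prod_append, List.prod_replicate,
    pow_mul, hg, one_pow, one_mul]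

def step (x : Fin 6 × Fin 6 × Fin 6 × Fin 6) : Equiv.Perm (Fin 24) :=
  E * rA ^ (x.1 : ℕ) * rC ^ (x.2.1 : ℕ) * rB ^ (x.2.2.1 : ℕ) * rD ^ (x.2.2.2 : ℕ)

def Adjacent (a b : Fin 6) : Prop :=
  ((a : ℕ) : ZMod 6) - ((b : ℕ) : ZMod 6) = -1 ∨
    ((a : ℕ) : ZMod 6) - ((b : ℕ) : ZMod 6) = 0 ∨
    ((a : ℕ) : ZMod 6) - ((b : ℕ) : ZMod 6) = 1

instance : DecidableRel Adjacent := fun a b => by unfold Adjacent; infer_instance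

theorem step_mem_S {x : Fin 6 × Fin 6 × Fin 6 × Fin 6} (hAC : Adjacent x.1 x.2.1)
    (hBD : Adjacent x.2.2.1 x.2.2.2) : step x ∈ S :=
  ⟨x.1, x.2.1, x.2.2.1, x.2.2.2, hAC, hBD, rfl⟩

theorem step_zero : step 0 = E := by
  simp only [step, Prod.fst_zero, Prod.snd_zero, Fin.val_zero, pow_zero, mul_one]

def swapExponents : List (Fin 6 × Fin 6 × Fin 6 × Fin 6) :=
  [(1, 0, 5, 4), (1, 0, 0, 0), (0, 0, 1, 2), (1, 0, 3, 2), (4, 3, 1, 2), (0, 5, 3, 3),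
   (2, 3, 0, 5), (5, 4, 3, 2), (3, 3, 0, 1), (5, 0, 1, 2), (4, 4, 5, 0), (0, 0, 3, 3)]

set_option maxRecDepth 10000 in
theorem swapExponents_adjacent :
    ∀ x ∈ swapExponents, Adjacent x.1 x.2.1 ∧ Adjacent x.2.2.1 x.2.2.2 := by
  decide

set_option maxRecDepth 400000 in
theorem prod_reverse_map_step_swapExponents :
    (swapExponents.map step).reverse.prod = Equiv.swap 0 1 := by
  decide

def swapWord : List (Equiv.Perm (Fin 24)) :=
  swapExponents.map step ++ List.replicate (4 * 14) (step 0)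

theorem swapWord_mem_S : ∀ g ∈ swapWord, g ∈ S := by
  intro g hg
  rcases List.mem_append.mp hg with hg | hg
  · obtain ⟨x, hx, rfl⟩ := List.mem_map.mp hg
    exact step_mem_S (swapExponents_adjacent x hx).1 (swapExponents_adjacent x hx).2
  · rw [List.eq_of_mem_replicate hg]
    exact step_mem_S (by decide) (by decide)

theorem swapWord_length : swapWord.length = 68 := rfl

theorem prod_reverse_swapWord : swapWord.reverse.prod = Equiv.swap 0 1 := by
  rw [swapWord, step_zero, List.prod_reverse_append_replicate _ E_pow_four,
    prod_reverse_map_step_swapExponents]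

/-- The transposition sequence F: a 68-step word in S realizing the swap (0 1). -/
theorem swap01_realizable :
    (∃ l : List (Equiv.Perm (Fin 24)),
      (∀ g ∈ l, g ∈ S) ∧ l.length = 68 ∧ l.reverse.prod = Equiv.swap (0 : Fin 24) 1) ∧
    Equiv.swap (0 : Fin 24) 1 ∈ Submonoid.closure S := by
  refine ⟨⟨swapWord, swapWord_mem_S, swapWord_length, prod_reverse_swapWord⟩, ?_⟩
  rw [← prod_reverse_swapWord]
  exact Submonoid.list_prod_mem _ fun g hg =>
    Submonoid.subset_closure (swapWord_mem_S g (List.mem_reverse.mp hg))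

end Volleyball
end

section
/- The transposition sequence G: there is a word of length 212 in S whose composite is the transposition Equiv.swap 0 2 (swapping the two back-row positions 0 and 2 of quadrant A, which have one space in between, and fixing all other positions); in particular Equiv.swap 0 2 ∈ Submonoid.closure S. -/
set_option maxRecDepth 100000
set_option maxHeartbeats 1000000

namespace Volleyball

lemma cast_sub_eq (a b : Fin 6) :
    ((a : ℕ) : ZMod 6) - ((b : ℕ) : ZMod 6) = ((((a : ℕ) + 6 - (b : ℕ)) % 6 : ℕ) : ZMod 6) := by
  have hb : (b : ℕ) ≤ (a : ℕ) + 6 := by omega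
  rw [ZMod.natCast_mod, Nat.cast_sub hb, Nat.cast_add, ZMod.natCast_self]
  ring

lemma five_eq : (((5 : ℕ)) : ZMod 6) = -1 := by
  have h := ZMod.natCast_self 6
  push_cast at h ⊢
  linear_combination h

lemma imp1 (a b : Fin 6)
    (h : ((a : ℕ) + 6 - (b : ℕ)) % 6 = 0 ∨ ((a : ℕ) + 6 - (b : ℕ)) % 6 = 1 ∨
         ((a : ℕ) + 6 - (b : ℕ)) % 6 = 5) :
    ((a : ℕ) : ZMod 6) - ((b : ℕ) : ZMod 6) = -1 ∨
    ((a : ℕ) : ZMod 6) - ((b : ℕ) : ZMod 6) = 0 ∨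
    ((a : ℕ) : ZMod 6) - ((b : ℕ) : ZMod 6) = 1 := by
  rw [cast_sub_eq]
  rcases h with h | h | h <;> rw [h]
  · exact Or.inr (Or.inl Nat.cast_zero)
  · exact Or.inr (Or.inr Nat.cast_one)
  · exact Or.inl five_eq


def pwa0 : Equiv.Perm (Fin 24) := (1 : Equiv.Perm (Fin 24))

lemma ha0 : rA ^ ((((0 : Fin 6)) : ℕ)) = pwa0 := by decide

def pwa1 : Equiv.Perm (Fin 24) := ([0,1,2,8,7,6] : List (Fin 24)).formPerm

lemma ha1 : rA ^ ((((1 : Fin 6)) : ℕ)) = pwa1 := by decide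

def pwa2 : Equiv.Perm (Fin 24) := ([0,2,7] : List (Fin 24)).formPerm * ([1,8,6] : List (Fin 24)).formPerm

lemma ha2 : rA ^ ((((2 : Fin 6)) : ℕ)) = pwa2 := by decide

def pwa3 : Equiv.Perm (Fin 24) := ([0,8] : List (Fin 24)).formPerm * ([1,7] : List (Fin 24)).formPerm * ([2,6] : List (Fin 24)).formPerm

lemma ha3 : rA ^ ((((3 : Fin 6)) : ℕ)) = pwa3 := by decide

def pwa4 : Equiv.Perm (Fin 24) := ([0,7,2] : List (Fin 24)).formPerm * ([1,6,8] : List (Fin 24)).formPerm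

lemma ha4 : rA ^ ((((4 : Fin 6)) : ℕ)) = pwa4 := by decide

def pwa5 : Equiv.Perm (Fin 24) := ([0,6,7,8,2,1] : List (Fin 24)).formPerm

lemma ha5 : rA ^ ((((5 : Fin 6)) : ℕ)) = pwa5 := by decide

def pwb0 : Equiv.Perm (Fin 24) := (1 : Equiv.Perm (Fin 24))

lemma hb0 : rB ^ ((((0 : Fin 6)) : ℕ)) = pwb0 := by decide

def pwb1 : Equiv.Perm (Fin 24) := ([3,4,5,11,10,9] : List (Fin 24)).formPerm

lemma hb1 : rB ^ ((((1 : Fin 6)) : ℕ)) = pwb1 := by decide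

def pwb2 : Equiv.Perm (Fin 24) := ([3,5,10] : List (Fin 24)).formPerm * ([4,11,9] : List (Fin 24)).formPerm

lemma hb2 : rB ^ ((((2 : Fin 6)) : ℕ)) = pwb2 := by decide

def pwb3 : Equiv.Perm (Fin 24) := ([3,11] : List (Fin 24)).formPerm * ([4,10] : List (Fin 24)).formPerm * ([5,9] : List (Fin 24)).formPerm

lemma hb3 : rB ^ ((((3 : Fin 6)) : ℕ)) = pwb3 := by decide

def pwb4 : Equiv.Perm (Fin 24) := ([3,10,5] : List (Fin 24)).formPerm * ([4,9,11] : List (Fin 24)).formPerm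

lemma hb4 : rB ^ ((((4 : Fin 6)) : ℕ)) = pwb4 := by decide

def pwb5 : Equiv.Perm (Fin 24) := ([3,9,10,11,5,4] : List (Fin 24)).formPerm

lemma hb5 : rB ^ ((((5 : Fin 6)) : ℕ)) = pwb5 := by decide

def pwc0 : Equiv.Perm (Fin 24) := (1 : Equiv.Perm (Fin 24))

lemma hc0 : rC ^ ((((0 : Fin 6)) : ℕ)) = pwc0 := by decide

def pwc1 : Equiv.Perm (Fin 24) := ([12,13,14,20,19,18] : List (Fin 24)).formPerm

lemma hc1 : rC ^ ((((1 : Fin 6)) : ℕ)) = pwc1 := by decide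

def pwc2 : Equiv.Perm (Fin 24) := ([12,14,19] : List (Fin 24)).formPerm * ([13,20,18] : List (Fin 24)).formPerm

lemma hc2 : rC ^ ((((2 : Fin 6)) : ℕ)) = pwc2 := by decide

def pwc3 : Equiv.Perm (Fin 24) := ([12,20] : List (Fin 24)).formPerm * ([13,19] : List (Fin 24)).formPerm * ([14,18] : List (Fin 24)).formPerm

lemma hc3 : rC ^ ((((3 : Fin 6)) : ℕ)) = pwc3 := by decide

def pwc4 : Equiv.Perm (Fin 24) := ([12,19,14] : List (Fin 24)).formPerm * ([13,18,20] : List (Fin 24)).formPerm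

lemma hc4 : rC ^ ((((4 : Fin 6)) : ℕ)) = pwc4 := by decide

def pwc5 : Equiv.Perm (Fin 24) := ([12,18,19,20,14,13] : List (Fin 24)).formPerm

lemma hc5 : rC ^ ((((5 : Fin 6)) : ℕ)) = pwc5 := by decide

def pwd0 : Equiv.Perm (Fin 24) := (1 : Equiv.Perm (Fin 24))

lemma hd0 : rD ^ ((((0 : Fin 6)) : ℕ)) = pwd0 := by decide

def pwd1 : Equiv.Perm (Fin 24) := ([15,16,17,23,22,21] : List (Fin 24)).formPerm

lemma hd1 : rD ^ ((((1 : Fin 6)) : ℕ)) = pwd1 := by decide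

def pwd2 : Equiv.Perm (Fin 24) := ([15,17,22] : List (Fin 24)).formPerm * ([16,23,21] : List (Fin 24)).formPerm

lemma hd2 : rD ^ ((((2 : Fin 6)) : ℕ)) = pwd2 := by decide

def pwd3 : Equiv.Perm (Fin 24) := ([15,23] : List (Fin 24)).formPerm * ([16,22] : List (Fin 24)).formPerm * ([17,21] : List (Fin 24)).formPerm

lemma hd3 : rD ^ ((((3 : Fin 6)) : ℕ)) = pwd3 := by decide

def pwd4 : Equiv.Perm (Fin 24) := ([15,22,17] : List (Fin 24)).formPerm * ([16,21,23] : List (Fin 24)).formPerm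

lemma hd4 : rD ^ ((((4 : Fin 6)) : ℕ)) = pwd4 := by decide

def pwd5 : Equiv.Perm (Fin 24) := ([15,21,22,23,17,16] : List (Fin 24)).formPerm

lemma hd5 : rD ^ ((((5 : Fin 6)) : ℕ)) = pwd5 := by decide

def s0 : Equiv.Perm (Fin 24) := ([6,9,17,14] : List (Fin 24)).formPerm * ([7,10,16,13] : List (Fin 24)).formPerm * ([8,11,15,12] : List (Fin 24)).formPerm

lemma hs0 : step (0,0,0,0) = s0 := by
  show E * rA ^ (((0 : Fin 6)) : ℕ) * rC ^ (((0 : Fin 6)) : ℕ) *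
      rB ^ (((0 : Fin 6)) : ℕ) * rD ^ (((0 : Fin 6)) : ℕ) = s0
  rw [ha0, hc0, hb0, hd0]
  decide

def s1 : Equiv.Perm (Fin 24) := ([3,15,22,14,7,10,4,16,21,23,13,8,11] : List (Fin 24)).formPerm * ([5,17,12,18,19,20,6,9] : List (Fin 24)).formPerm

lemma hs1 : step (0,5,3,4) = s1 := by
  show E * rA ^ (((0 : Fin 6)) : ℕ) * rC ^ (((5 : Fin 6)) : ℕ) *
      rB ^ (((3 : Fin 6)) : ℕ) * rD ^ (((4 : Fin 6)) : ℕ) = s1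
  rw [ha0, hc5, hb3, hd4]
  decide

def s2 : Equiv.Perm (Fin 24) := ([6,9,17,13] : List (Fin 24)).formPerm * ([7,10,16,12] : List (Fin 24)).formPerm * ([8,11,15,21,22,23,14,20,19,18] : List (Fin 24)).formPerm

lemma hs2 : step (0,1,0,5) = s2 := by
  show E * rA ^ (((0 : Fin 6)) : ℕ) * rC ^ (((1 : Fin 6)) : ℕ) *
      rB ^ (((0 : Fin 6)) : ℕ) * rD ^ (((5 : Fin 6)) : ℕ) = s2
  rw [ha0, hc1, hb0, hd5]
  decide

def s3 : Equiv.Perm (Fin 24) := ([6,9,17,23,22,21,12,8,11,15,13,7,10,16,14] : List (Fin 24)).formPerm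

lemma hs3 : step (0,0,0,1) = s3 := by
  show E * rA ^ (((0 : Fin 6)) : ℕ) * rC ^ (((0 : Fin 6)) : ℕ) *
      rB ^ (((0 : Fin 6)) : ℕ) * rD ^ (((1 : Fin 6)) : ℕ) = s3
  rw [ha0, hc0, hb0, hd1]
  decide

def s4 : Equiv.Perm (Fin 24) := ([3,15,22,14,6,9,5,17,12,8,11] : List (Fin 24)).formPerm * ([4,16,21,23,13,7,10] : List (Fin 24)).formPerm

lemma hs4 : step (0,0,3,4) = s4 := by
  show E * rA ^ (((0 : Fin 6)) : ℕ) * rC ^ (((0 : Fin 6)) : ℕ) *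
      rB ^ (((3 : Fin 6)) : ℕ) * rD ^ (((4 : Fin 6)) : ℕ) = s4
  rw [ha0, hc0, hb3, hd4]
  decide

def s5 : Equiv.Perm (Fin 24) := ([6,9,17,23,22,21,12,7,10,16,14,20,19,18,8,11,15,13] : List (Fin 24)).formPerm

lemma hs5 : step (0,1,0,1) = s5 := by
  show E * rA ^ (((0 : Fin 6)) : ℕ) * rC ^ (((1 : Fin 6)) : ℕ) *
      rB ^ (((0 : Fin 6)) : ℕ) * rD ^ (((1 : Fin 6)) : ℕ) = s5
  rw [ha0, hc1, hb0, hd1]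
  decide

def s6 : Equiv.Perm (Fin 24) := ([6,9,17,14,7,10,16,13,8,11,15,12,18,19,20] : List (Fin 24)).formPerm

lemma hs6 : step (0,5,0,0) = s6 := by
  show E * rA ^ (((0 : Fin 6)) : ℕ) * rC ^ (((5 : Fin 6)) : ℕ) *
      rB ^ (((0 : Fin 6)) : ℕ) * rD ^ (((0 : Fin 6)) : ℕ) = s6
  rw [ha0, hc5, hb0, hd0]
  decide

def s7 : Equiv.Perm (Fin 24) := ([3,5,16,22,13,8,11,17,21,14,7,10] : List (Fin 24)).formPerm * ([4,15,23,12,18,19,20,6,9] : List (Fin 24)).formPerm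

lemma hs7 : step (0,5,2,3) = s7 := by
  show E * rA ^ (((0 : Fin 6)) : ℕ) * rC ^ (((5 : Fin 6)) : ℕ) *
      rB ^ (((2 : Fin 6)) : ℕ) * rD ^ (((3 : Fin 6)) : ℕ) = s7
  rw [ha0, hc5, hb2, hd3]
  decide

def s8 : Equiv.Perm (Fin 24) := ([3,16,12,7,10,5] : List (Fin 24)).formPerm * ([4,17,13,6,9,15,21,22,23,14,20,19,18,8,11] : List (Fin 24)).formPerm

lemma hs8 : step (0,1,4,5) = s8 := by
  show E * rA ^ (((0 : Fin 6)) : ℕ) * rC ^ (((1 : Fin 6)) : ℕ) *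
      rB ^ (((4 : Fin 6)) : ℕ) * rD ^ (((5 : Fin 6)) : ℕ) = s8
  rw [ha0, hc1, hb4, hd5]
  decide

def s9 : Equiv.Perm (Fin 24) := ([3,4,5,15,12,8,11,16,13,7,10,17,14,6,9] : List (Fin 24)).formPerm

lemma hs9 : step (0,0,1,0) = s9 := by
  show E * rA ^ (((0 : Fin 6)) : ℕ) * rC ^ (((0 : Fin 6)) : ℕ) *
      rB ^ (((1 : Fin 6)) : ℕ) * rD ^ (((0 : Fin 6)) : ℕ) = s9
  rw [ha0, hc0, hb1, hd0]
  decide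

def s10 : Equiv.Perm (Fin 24) := ([3,15,23,12,7,10,4,16,22,13,6,9,5,17,21,14,20,19,18,8,11] : List (Fin 24)).formPerm

lemma hs10 : step (0,1,3,3) = s10 := by
  show E * rA ^ (((0 : Fin 6)) : ℕ) * rC ^ (((1 : Fin 6)) : ℕ) *
      rB ^ (((3 : Fin 6)) : ℕ) * rD ^ (((3 : Fin 6)) : ℕ) = s10
  rw [ha0, hc1, hb3, hd3]
  decide

def s11 : Equiv.Perm (Fin 24) := ([6,9,17,13,8,11,15,21,22,23,14,7,10,16,12,18,19,20] : List (Fin 24)).formPerm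

lemma hs11 : step (0,5,0,5) = s11 := by
  show E * rA ^ (((0 : Fin 6)) : ℕ) * rC ^ (((5 : Fin 6)) : ℕ) *
      rB ^ (((0 : Fin 6)) : ℕ) * rD ^ (((5 : Fin 6)) : ℕ) = s11
  rw [ha0, hc5, hb0, hd5]
  decide

def s12 : Equiv.Perm (Fin 24) := ([6,9,17,14,20,19,18,8,11,15,12,7,10,16,13] : List (Fin 24)).formPerm

lemma hs12 : step (0,1,0,0) = s12 := by
  show E * rA ^ (((0 : Fin 6)) : ℕ) * rC ^ (((1 : Fin 6)) : ℕ) *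
      rB ^ (((0 : Fin 6)) : ℕ) * rD ^ (((0 : Fin 6)) : ℕ) = s12
  rw [ha0, hc1, hb0, hd0]
  decide

def s13 : Equiv.Perm (Fin 24) := ([6,9,17,13,7,10,16,12,8,11,15,21,22,23,14] : List (Fin 24)).formPerm

lemma hs13 : step (0,0,0,5) = s13 := by
  show E * rA ^ (((0 : Fin 6)) : ℕ) * rC ^ (((0 : Fin 6)) : ℕ) *
      rB ^ (((0 : Fin 6)) : ℕ) * rD ^ (((5 : Fin 6)) : ℕ) = s13
  rw [ha0, hc0, hb0, hd5]
  decide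

def s14 : Equiv.Perm (Fin 24) := ([0,10,15,12,19,6,11,5,4,3,17,14,8,1,9,16,13,18,20,7,2] : List (Fin 24)).formPerm

lemma hs14 : step (4,4,5,0) = s14 := by
  show E * rA ^ (((4 : Fin 6)) : ℕ) * rC ^ (((4 : Fin 6)) : ℕ) *
      rB ^ (((5 : Fin 6)) : ℕ) * rD ^ (((0 : Fin 6)) : ℕ) = s14
  rw [ha4, hc4, hb5, hd0]
  decide

def s15 : Equiv.Perm (Fin 24) := ([0,2,10,3,5,16,22,13,19,7] : List (Fin 24)).formPerm * ([1,11,17,21,14,18,6] : List (Fin 24)).formPerm * ([4,15,23,12,20,8,9] : List (Fin 24)).formPerm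

lemma hs15 : step (2,3,2,3) = s15 := by
  show E * rA ^ (((2 : Fin 6)) : ℕ) * rC ^ (((3 : Fin 6)) : ℕ) *
      rB ^ (((2 : Fin 6)) : ℕ) * rD ^ (((3 : Fin 6)) : ℕ) = s15
  rw [ha2, hc3, hb2, hd3]
  decide

def s16 : Equiv.Perm (Fin 24) := ([3,17,12,18,19,20,6,9,16,21,23,13,8,11,5,4] : List (Fin 24)).formPerm * ([7,10,15,22,14] : List (Fin 24)).formPerm

lemma hs16 : step (0,5,5,4) = s16 := by
  show E * rA ^ (((0 : Fin 6)) : ℕ) * rC ^ (((5 : Fin 6)) : ℕ) *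
      rB ^ (((5 : Fin 6)) : ℕ) * rD ^ (((4 : Fin 6)) : ℕ) = s16
  rw [ha0, hc5, hb5, hd4]
  decide

def s17 : Equiv.Perm (Fin 24) := ([0,9,15,23,12,18,19,20,6,10,5,3,16,22,13,8,2,1] : List (Fin 24)).formPerm * ([4,17,21,14,7,11] : List (Fin 24)).formPerm

lemma hs17 : step (5,5,4,3) = s17 := by
  show E * rA ^ (((5 : Fin 6)) : ℕ) * rC ^ (((5 : Fin 6)) : ℕ) *
      rB ^ (((4 : Fin 6)) : ℕ) * rD ^ (((3 : Fin 6)) : ℕ) = s17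
  rw [ha5, hc5, hb4, hd3]
  decide

def s18 : Equiv.Perm (Fin 24) := ([0,1,2,11,3,15,14,6] : List (Fin 24)).formPerm * ([4,16,23,21,13,7,9,5,17,22,12,8,10] : List (Fin 24)).formPerm

lemma hs18 : step (1,0,3,2) = s18 := by
  show E * rA ^ (((1 : Fin 6)) : ℕ) * rC ^ (((0 : Fin 6)) : ℕ) *
      rB ^ (((3 : Fin 6)) : ℕ) * rD ^ (((2 : Fin 6)) : ℕ) = s18
  rw [ha1, hc0, hb3, hd2]
  decide

def s19 : Equiv.Perm (Fin 24) := ([3,15,14,7,10,4,16,23,21,13,8,11] : List (Fin 24)).formPerm * ([5,17,22,12,18,19,20,6,9] : List (Fin 24)).formPerm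

lemma hs19 : step (0,5,3,2) = s19 := by
  show E * rA ^ (((0 : Fin 6)) : ℕ) * rC ^ (((5 : Fin 6)) : ℕ) *
      rB ^ (((3 : Fin 6)) : ℕ) * rD ^ (((2 : Fin 6)) : ℕ) = s19
  rw [ha0, hc5, hb3, hd2]
  decide

def s20 : Equiv.Perm (Fin 24) := ([0,11,15,21,22,23,14,8] : List (Fin 24)).formPerm * ([1,10,16,12,19,6,2,9,17,13,18,20,7] : List (Fin 24)).formPerm

lemma hs20 : step (3,4,0,5) = s20 := by
  show E * rA ^ (((3 : Fin 6)) : ℕ) * rC ^ (((4 : Fin 6)) : ℕ) *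
      rB ^ (((0 : Fin 6)) : ℕ) * rD ^ (((5 : Fin 6)) : ℕ) = s20
  rw [ha3, hc4, hb0, hd5]
  decide

def s21 : Equiv.Perm (Fin 24) := ([0,11,3,15,14,18,6,2,9,5,17,22,12,20,8] : List (Fin 24)).formPerm * ([1,10,4,16,23,21,13,19,7] : List (Fin 24)).formPerm

lemma hs21 : step (3,3,3,2) = s21 := by
  show E * rA ^ (((3 : Fin 6)) : ℕ) * rC ^ (((3 : Fin 6)) : ℕ) *
      rB ^ (((3 : Fin 6)) : ℕ) * rD ^ (((2 : Fin 6)) : ℕ) = s21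
  rw [ha3, hc3, hb3, hd2]
  decide

def s22 : Equiv.Perm (Fin 24) := ([0,11,16,14,19,8] : List (Fin 24)).formPerm * ([1,10,17,23,22,21,12,6,2,9,3,4,5,15,13,20,18,7] : List (Fin 24)).formPerm

lemma hs22 : step (3,2,1,1) = s22 := by
  show E * rA ^ (((3 : Fin 6)) : ℕ) * rC ^ (((2 : Fin 6)) : ℕ) *
      rB ^ (((1 : Fin 6)) : ℕ) * rD ^ (((1 : Fin 6)) : ℕ) = s22
  rw [ha3, hc2, hb1, hd1]
  decide

def s23 : Equiv.Perm (Fin 24) := ([0,11,15,13,20,18,7,1,10,16,14,19,8] : List (Fin 24)).formPerm * ([2,9,17,23,22,21,12,6] : List (Fin 24)).formPerm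

lemma hs23 : step (3,2,0,1) = s23 := by
  show E * rA ^ (((3 : Fin 6)) : ℕ) * rC ^ (((2 : Fin 6)) : ℕ) *
      rB ^ (((0 : Fin 6)) : ℕ) * rD ^ (((1 : Fin 6)) : ℕ) = s23
  rw [ha3, hc2, hb0, hd1]
  decide

def s24 : Equiv.Perm (Fin 24) := ([0,1,2,11,16,13,20,18,7,9,3,4,5,15,12,6] : List (Fin 24)).formPerm * ([8,10,17,14,19] : List (Fin 24)).formPerm

lemma hs24 : step (1,2,1,0) = s24 := by
  show E * rA ^ (((1 : Fin 6)) : ℕ) * rC ^ (((2 : Fin 6)) : ℕ) *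
      rB ^ (((1 : Fin 6)) : ℕ) * rD ^ (((0 : Fin 6)) : ℕ) = s24
  rw [ha1, hc2, hb1, hd0]
  decide

def s25 : Equiv.Perm (Fin 24) := ([0,9,16,12,19,6,10,15,21,22,23,14,8,2,1] : List (Fin 24)).formPerm * ([3,17,13,18,20,7,11,5,4] : List (Fin 24)).formPerm

lemma hs25 : step (5,4,5,5) = s25 := by
  show E * rA ^ (((5 : Fin 6)) : ℕ) * rC ^ (((4 : Fin 6)) : ℕ) *
      rB ^ (((5 : Fin 6)) : ℕ) * rD ^ (((5 : Fin 6)) : ℕ) = s25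
  rw [ha5, hc4, hb5, hd5]
  decide

def s26 : Equiv.Perm (Fin 24) := ([3,15,23,12,8,11] : List (Fin 24)).formPerm * ([4,16,22,13,7,10] : List (Fin 24)).formPerm * ([5,17,21,14,6,9] : List (Fin 24)).formPerm

lemma hs26 : step (0,0,3,3) = s26 := by
  show E * rA ^ (((0 : Fin 6)) : ℕ) * rC ^ (((0 : Fin 6)) : ℕ) *
      rB ^ (((3 : Fin 6)) : ℕ) * rD ^ (((3 : Fin 6)) : ℕ) = s26
  rw [ha0, hc0, hb3, hd3]
  decide

def s27 : Equiv.Perm (Fin 24) := ([0,9,3,4,5,15,12,8,2,1] : List (Fin 24)).formPerm * ([6,10,17,14] : List (Fin 24)).formPerm * ([7,11,16,13] : List (Fin 24)).formPerm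

lemma hs27 : step (5,0,1,0) = s27 := by
  show E * rA ^ (((5 : Fin 6)) : ℕ) * rC ^ (((0 : Fin 6)) : ℕ) *
      rB ^ (((1 : Fin 6)) : ℕ) * rD ^ (((0 : Fin 6)) : ℕ) = s27
  rw [ha5, hc0, hb1, hd0]
  decide

def s28 : Equiv.Perm (Fin 24) := ([0,1,2,11,5,4,3,17,13,7,9,16,12,8,10,15,21,22,23,14,6] : List (Fin 24)).formPerm

lemma hs28 : step (1,0,5,5) = s28 := by
  show E * rA ^ (((1 : Fin 6)) : ℕ) * rC ^ (((0 : Fin 6)) : ℕ) *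
      rB ^ (((5 : Fin 6)) : ℕ) * rD ^ (((5 : Fin 6)) : ℕ) = s28
  rw [ha1, hc0, hb5, hd5]
  decide

def s29 : Equiv.Perm (Fin 24) := ([3,16,22,13,6,9,15,23,12,7,10,5] : List (Fin 24)).formPerm * ([4,17,21,14,20,19,18,8,11] : List (Fin 24)).formPerm

lemma hs29 : step (0,1,4,3) = s29 := by
  show E * rA ^ (((0 : Fin 6)) : ℕ) * rC ^ (((1 : Fin 6)) : ℕ) *
      rB ^ (((4 : Fin 6)) : ℕ) * rD ^ (((3 : Fin 6)) : ℕ) = s29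
  rw [ha0, hc1, hb4, hd3]
  decide

def s30 : Equiv.Perm (Fin 24) := ([3,5,16,14,20,19,18,8,11,17,23,22,21,12,7,10] : List (Fin 24)).formPerm * ([4,15,13,6,9] : List (Fin 24)).formPerm

lemma hs30 : step (0,1,2,1) = s30 := by
  show E * rA ^ (((0 : Fin 6)) : ℕ) * rC ^ (((1 : Fin 6)) : ℕ) *
      rB ^ (((2 : Fin 6)) : ℕ) * rD ^ (((1 : Fin 6)) : ℕ) = s30
  rw [ha0, hc1, hb2, hd1]
  decide

def s31 : Equiv.Perm (Fin 24) := ([0,2,10,4,16,22,13,6,1,11,3,15,23,12,7] : List (Fin 24)).formPerm * ([5,17,21,14,20,19,18,8,9] : List (Fin 24)).formPerm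

lemma hs31 : step (2,1,3,3) = s31 := by
  show E * rA ^ (((2 : Fin 6)) : ℕ) * rC ^ (((1 : Fin 6)) : ℕ) *
      rB ^ (((3 : Fin 6)) : ℕ) * rD ^ (((3 : Fin 6)) : ℕ) = s31
  rw [ha2, hc1, hb3, hd3]
  decide

def s32 : Equiv.Perm (Fin 24) := ([0,2,10,4,16,21,23,13,20,18,7] : List (Fin 24)).formPerm * ([1,11,3,15,22,14,19,8,9,5,17,12,6] : List (Fin 24)).formPerm

lemma hs32 : step (2,2,3,4) = s32 := by
  show E * rA ^ (((2 : Fin 6)) : ℕ) * rC ^ (((2 : Fin 6)) : ℕ) *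
      rB ^ (((3 : Fin 6)) : ℕ) * rD ^ (((4 : Fin 6)) : ℕ) = s32
  rw [ha2, hc2, hb3, hd4]
  decide

def s33 : Equiv.Perm (Fin 24) := ([0,2,10,16,14,18,6,1,11,15,13,19,7] : List (Fin 24)).formPerm * ([8,9,17,23,22,21,12,20] : List (Fin 24)).formPerm

lemma hs33 : step (2,3,0,1) = s33 := by
  show E * rA ^ (((2 : Fin 6)) : ℕ) * rC ^ (((3 : Fin 6)) : ℕ) *
      rB ^ (((0 : Fin 6)) : ℕ) * rD ^ (((1 : Fin 6)) : ℕ) = s33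
  rw [ha2, hc3, hb0, hd1]
  decide

def s34 : Equiv.Perm (Fin 24) := ([3,4,5,15,13,6,9] : List (Fin 24)).formPerm * ([7,10,17,23,22,21,12] : List (Fin 24)).formPerm * ([8,11,16,14,20,19,18] : List (Fin 24)).formPerm

lemma hs34 : step (0,1,1,1) = s34 := by
  show E * rA ^ (((0 : Fin 6)) : ℕ) * rC ^ (((1 : Fin 6)) : ℕ) *
      rB ^ (((1 : Fin 6)) : ℕ) * rD ^ (((1 : Fin 6)) : ℕ) = s34
  rw [ha0, hc1, hb1, hd1]
  decide

def s35 : Equiv.Perm (Fin 24) := ([0,11,15,12,20,8] : List (Fin 24)).formPerm * ([1,10,16,13,19,7] : List (Fin 24)).formPerm * ([2,9,17,14,18,6] : List (Fin 24)).formPerm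

lemma hs35 : step (3,3,0,0) = s35 := by
  show E * rA ^ (((3 : Fin 6)) : ℕ) * rC ^ (((3 : Fin 6)) : ℕ) *
      rB ^ (((0 : Fin 6)) : ℕ) * rD ^ (((0 : Fin 6)) : ℕ) = s35
  rw [ha3, hc3, hb0, hd0]
  decide

def s36 : Equiv.Perm (Fin 24) := ([0,2,10,16,13,20,18,7] : List (Fin 24)).formPerm * ([1,11,15,12,6] : List (Fin 24)).formPerm * ([8,9,17,14,19] : List (Fin 24)).formPerm

lemma hs36 : step (2,2,0,0) = s36 := by
  show E * rA ^ (((2 : Fin 6)) : ℕ) * rC ^ (((2 : Fin 6)) : ℕ) *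
      rB ^ (((0 : Fin 6)) : ℕ) * rD ^ (((0 : Fin 6)) : ℕ) = s36
  rw [ha2, hc2, hb0, hd0]
  decide

def s37 : Equiv.Perm (Fin 24) := ([3,15,14,20,19,18,8,11] : List (Fin 24)).formPerm * ([4,16,23,21,13,6,9,5,17,22,12,7,10] : List (Fin 24)).formPerm

lemma hs37 : step (0,1,3,2) = s37 := by
  show E * rA ^ (((0 : Fin 6)) : ℕ) * rC ^ (((1 : Fin 6)) : ℕ) *
      rB ^ (((3 : Fin 6)) : ℕ) * rD ^ (((2 : Fin 6)) : ℕ) = s37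
  rw [ha0, hc1, hb3, hd2]
  decide

def s38 : Equiv.Perm (Fin 24) := ([3,4,5,15,12,7,10,17,14,20,19,18,8,11,16,13,6,9] : List (Fin 24)).formPerm

lemma hs38 : step (0,1,1,0) = s38 := by
  show E * rA ^ (((0 : Fin 6)) : ℕ) * rC ^ (((1 : Fin 6)) : ℕ) *
      rB ^ (((1 : Fin 6)) : ℕ) * rD ^ (((0 : Fin 6)) : ℕ) = s38
  rw [ha0, hc1, hb1, hd0]
  decide

def s39 : Equiv.Perm (Fin 24) := ([3,15,23,12,18,19,20,6,9,5,17,21,14,7,10,4,16,22,13,8,11] : List (Fin 24)).formPerm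

lemma hs39 : step (0,5,3,3) = s39 := by
  show E * rA ^ (((0 : Fin 6)) : ℕ) * rC ^ (((5 : Fin 6)) : ℕ) *
      rB ^ (((3 : Fin 6)) : ℕ) * rD ^ (((3 : Fin 6)) : ℕ) = s39
  rw [ha0, hc5, hb3, hd3]
  decide

def s40 : Equiv.Perm (Fin 24) := ([0,9,3,4,5,15,14,8,2,1] : List (Fin 24)).formPerm * ([6,10,17,22,12,19] : List (Fin 24)).formPerm * ([7,11,16,23,21,13,18,20] : List (Fin 24)).formPerm

lemma hs40 : step (5,4,1,2) = s40 := by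
  show E * rA ^ (((5 : Fin 6)) : ℕ) * rC ^ (((4 : Fin 6)) : ℕ) *
      rB ^ (((1 : Fin 6)) : ℕ) * rD ^ (((2 : Fin 6)) : ℕ) = s40
  rw [ha5, hc4, hb1, hd2]
  decide

def s41 : Equiv.Perm (Fin 24) := ([0,1,2,11,17,23,22,21,12,7,9,4,15,13,6] : List (Fin 24)).formPerm * ([3,5,16,14,20,19,18,8,10] : List (Fin 24)).formPerm

lemma hs41 : step (1,1,2,1) = s41 := by
  show E * rA ^ (((1 : Fin 6)) : ℕ) * rC ^ (((1 : Fin 6)) : ℕ) *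
      rB ^ (((2 : Fin 6)) : ℕ) * rD ^ (((1 : Fin 6)) : ℕ) = s41
  rw [ha1, hc1, hb2, hd1]
  decide

def s42 : Equiv.Perm (Fin 24) := ([3,16,21,23,13,6,9,15,22,14,20,19,18,8,11,4,17,12,7,10,5] : List (Fin 24)).formPerm

lemma hs42 : step (0,1,4,4) = s42 := by
  show E * rA ^ (((0 : Fin 6)) : ℕ) * rC ^ (((1 : Fin 6)) : ℕ) *
      rB ^ (((4 : Fin 6)) : ℕ) * rD ^ (((4 : Fin 6)) : ℕ) = s42
  rw [ha0, hc1, hb4, hd4]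
  decide

def s43 : Equiv.Perm (Fin 24) := ([3,5,16,14,6,9,4,15,13,7,10] : List (Fin 24)).formPerm * ([8,11,17,23,22,21,12] : List (Fin 24)).formPerm

lemma hs43 : step (0,0,2,1) = s43 := by
  show E * rA ^ (((0 : Fin 6)) : ℕ) * rC ^ (((0 : Fin 6)) : ℕ) *
      rB ^ (((2 : Fin 6)) : ℕ) * rD ^ (((1 : Fin 6)) : ℕ) = s43
  rw [ha0, hc0, hb2, hd1]
  decide

def s44 : Equiv.Perm (Fin 24) := ([3,16,22,13,8,11,4,17,21,14,7,10,5] : List (Fin 24)).formPerm * ([6,9,15,23,12,18,19,20] : List (Fin 24)).formPerm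

lemma hs44 : step (0,5,4,3) = s44 := by
  show E * rA ^ (((0 : Fin 6)) : ℕ) * rC ^ (((5 : Fin 6)) : ℕ) *
      rB ^ (((4 : Fin 6)) : ℕ) * rD ^ (((3 : Fin 6)) : ℕ) = s44
  rw [ha0, hc5, hb4, hd3]
  decide

def s45 : Equiv.Perm (Fin 24) := ([0,1,2,11,16,13,7,9,3,4,5,15,12,8,10,17,14,6] : List (Fin 24)).formPerm

lemma hs45 : step (1,0,1,0) = s45 := by
  show E * rA ^ (((1 : Fin 6)) : ℕ) * rC ^ (((0 : Fin 6)) : ℕ) *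
      rB ^ (((1 : Fin 6)) : ℕ) * rD ^ (((0 : Fin 6)) : ℕ) = s45
  rw [ha1, hc0, hb1, hd0]
  decide

def s46 : Equiv.Perm (Fin 24) := ([0,9,4,15,14,8,2,1] : List (Fin 24)).formPerm * ([3,5,16,23,21,13,18,20,7,11,17,22,12,19,6,10] : List (Fin 24)).formPerm

lemma hs46 : step (5,4,2,2) = s46 := by
  show E * rA ^ (((5 : Fin 6)) : ℕ) * rC ^ (((4 : Fin 6)) : ℕ) *
      rB ^ (((2 : Fin 6)) : ℕ) * rD ^ (((2 : Fin 6)) : ℕ) = s46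
  rw [ha5, hc4, hb2, hd2]
  decide

def s47 : Equiv.Perm (Fin 24) := ([0,2,10,4,16,22,13,19,7] : List (Fin 24)).formPerm * ([1,11,3,15,23,12,20,8,9,5,17,21,14,18,6] : List (Fin 24)).formPerm

lemma hs47 : step (2,3,3,3) = s47 := by
  show E * rA ^ (((2 : Fin 6)) : ℕ) * rC ^ (((3 : Fin 6)) : ℕ) *
      rB ^ (((3 : Fin 6)) : ℕ) * rD ^ (((3 : Fin 6)) : ℕ) = s47
  rw [ha2, hc3, hb3, hd3]
  decide

def s48 : Equiv.Perm (Fin 24) := ([0,10,4,16,23,21,13,19,7,2] : List (Fin 24)).formPerm * ([1,9,5,17,22,12,20,8] : List (Fin 24)).formPerm * ([3,15,14,18,6,11] : List (Fin 24)).formPerm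

lemma hs48 : step (4,3,3,2) = s48 := by
  show E * rA ^ (((4 : Fin 6)) : ℕ) * rC ^ (((3 : Fin 6)) : ℕ) *
      rB ^ (((3 : Fin 6)) : ℕ) * rD ^ (((2 : Fin 6)) : ℕ) = s48
  rw [ha4, hc3, hb3, hd2]
  decide

def s49 : Equiv.Perm (Fin 24) := ([0,2,10,5,3,16,21,23,13,20,18,7] : List (Fin 24)).formPerm * ([1,11,4,17,12,6] : List (Fin 24)).formPerm * ([8,9,15,22,14,19] : List (Fin 24)).formPerm

lemma hs49 : step (2,2,4,4) = s49 := by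
  show E * rA ^ (((2 : Fin 6)) : ℕ) * rC ^ (((2 : Fin 6)) : ℕ) *
      rB ^ (((4 : Fin 6)) : ℕ) * rD ^ (((4 : Fin 6)) : ℕ) = s49
  rw [ha2, hc2, hb4, hd4]
  decide

def c1 : List (Fin 6 × Fin 6 × Fin 6 × Fin 6) := [(0,0,0,0),(0,0,0,0),(0,0,0,0),(0,5,3,4),(0,1,0,5),(0,0,0,0),(0,0,0,0),(0,0,0,0),(0,0,0,1),(0,0,0,0),(0,0,0,0),(0,0,3,4),(0,0,0,0),(0,0,0,0),(0,0,0,0),(0,1,0,1)]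

def p1 : Equiv.Perm (Fin 24) := ([8,21,14,12,23,13,22,19,18] : List (Fin 24)).formPerm

lemma hp1 : (c1.map step).reverse.prod = p1 := by
  simp only [c1, List.map_cons, List.map_nil, List.reverse_cons, List.reverse_nil,
    List.nil_append, List.cons_append, List.prod_cons, List.prod_nil, List.prod_append,
    mul_one, one_mul, hs0, hs1, hs2, hs3, hs4, hs5]
  decide

def c2 : List (Fin 6 × Fin 6 × Fin 6 × Fin 6) := [(0,0,0,0),(0,0,0,0),(0,0,0,0),(0,5,0,0),(0,0,0,0),(0,0,0,0),(0,0,0,1),(0,5,2,3),(0,0,0,0),(0,0,0,0),(0,0,0,0),(0,1,4,5),(0,0,0,0),(0,0,0,0),(0,0,0,0),(0,0,3,4)]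

def p2 : Equiv.Perm (Fin 24) := ([3,15] : List (Fin 24)).formPerm * ([4,16] : List (Fin 24)).formPerm * ([5,17] : List (Fin 24)).formPerm * ([8,18,19,20,23,22,21] : List (Fin 24)).formPerm

lemma hp2 : (c2.map step).reverse.prod = p2 := by
  simp only [c2, List.map_cons, List.map_nil, List.reverse_cons, List.reverse_nil,
    List.nil_append, List.cons_append, List.prod_cons, List.prod_nil, List.prod_append,
    mul_one, one_mul, hs0, hs3, hs4, hs6, hs7, hs8]
  decide

def c3 : List (Fin 6 × Fin 6 × Fin 6 × Fin 6) := [(0,0,0,0),(0,0,0,0),(0,0,1,0),(0,1,3,3),(0,0,0,0),(0,0,0,0),(0,0,0,0),(0,5,0,5),(0,1,0,0),(0,0,0,0),(0,0,0,0),(0,0,0,5),(0,0,0,0),(0,5,0,0),(0,0,0,0),(0,0,0,0)]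

def p3 : Equiv.Perm (Fin 24) := ([3,15] : List (Fin 24)).formPerm * ([4,16] : List (Fin 24)).formPerm * ([5,17] : List (Fin 24)).formPerm * ([12,14,18,21,13,23,22] : List (Fin 24)).formPerm

lemma hp3 : (c3.map step).reverse.prod = p3 := by
  simp only [c3, List.map_cons, List.map_nil, List.reverse_cons, List.reverse_nil,
    List.nil_append, List.cons_append, List.prod_cons, List.prod_nil, List.prod_append,
    mul_one, one_mul, hs0, hs6, hs9, hs10, hs11, hs12, hs13]
  decide

def c4 : List (Fin 6 × Fin 6 × Fin 6 × Fin 6) := [(0,0,0,0),(4,4,5,0),(0,0,0,0),(0,0,0,0),(0,0,0,5),(2,3,2,3),(0,0,0,0),(0,0,0,0),(0,0,0,0),(0,5,5,4),(0,0,0,0),(0,0,0,0),(0,0,0,0),(0,5,0,5),(0,0,0,0),(0,0,0,0)]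

def p4 : Equiv.Perm (Fin 24) := ([15,18,19,17,21,22,23,20,16] : List (Fin 24)).formPerm

lemma hp4 : (c4.map step).reverse.prod = p4 := by
  simp only [c4, List.map_cons, List.map_nil, List.reverse_cons, List.reverse_nil,
    List.nil_append, List.cons_append, List.prod_cons, List.prod_nil, List.prod_append,
    mul_one, one_mul, hs0, hs11, hs13, hs14, hs15, hs16]
  decide

def c5 : List (Fin 6 × Fin 6 × Fin 6 × Fin 6) := [(0,0,0,0),(0,1,0,0),(0,0,0,0),(0,0,0,0),(0,0,0,5),(5,5,4,3),(0,0,0,0),(0,0,0,0),(0,0,0,0),(1,0,3,2),(0,0,0,0),(0,0,0,0),(0,0,0,0),(0,5,5,4),(0,0,0,0),(0,0,0,0)]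

def p5 : Equiv.Perm (Fin 24) := ([9,21,10,22,11,23,15,19,20,17,16,18] : List (Fin 24)).formPerm

lemma hp5 : (c5.map step).reverse.prod = p5 := by
  simp only [c5, List.map_cons, List.map_nil, List.reverse_cons, List.reverse_nil,
    List.nil_append, List.cons_append, List.prod_cons, List.prod_nil, List.prod_append,
    mul_one, one_mul, hs0, hs12, hs13, hs16, hs17, hs18]
  decide

def c6 : List (Fin 6 × Fin 6 × Fin 6 × Fin 6) := [(0,0,0,0),(0,5,3,2),(0,0,0,0),(0,0,0,0),(0,0,0,0),(3,4,0,5),(0,0,0,0),(0,0,0,0),(0,0,0,0),(3,3,3,2),(0,0,0,0),(0,0,0,0),(0,0,0,1),(3,2,1,1),(0,0,0,0),(0,0,0,0)]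

def p6 : Equiv.Perm (Fin 24) := ([0,12] : List (Fin 24)).formPerm * ([1,13] : List (Fin 24)).formPerm * ([2,14] : List (Fin 24)).formPerm * ([3,4,5,8,7,6] : List (Fin 24)).formPerm * ([9,17,22] : List (Fin 24)).formPerm * ([10,11,21,23] : List (Fin 24)).formPerm * ([15,20,18,16,19] : List (Fin 24)).formPerm

lemma hp6 : (c6.map step).reverse.prod = p6 := by
  simp only [c6, List.map_cons, List.map_nil, List.reverse_cons, List.reverse_nil,
    List.nil_append, List.cons_append, List.prod_cons, List.prod_nil, List.prod_append,
    mul_one, one_mul, hs0, hs3, hs19, hs20, hs21, hs22]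
  decide

def c7 : List (Fin 6 × Fin 6 × Fin 6 × Fin 6) := [(0,0,0,0),(3,2,0,1),(0,0,0,0),(0,0,0,0),(0,0,0,0),(0,5,5,4),(0,0,0,0),(0,0,0,0),(0,1,0,5),(0,0,0,0),(0,0,0,0),(1,2,1,0),(0,0,0,0),(0,0,0,0),(0,0,0,0),(5,4,5,5)]

def p7 : Equiv.Perm (Fin 24) := ([0,12] : List (Fin 24)).formPerm * ([1,13] : List (Fin 24)).formPerm * ([2,20,18,22,17,19,21,14] : List (Fin 24)).formPerm * ([3,6,7,8,5,4] : List (Fin 24)).formPerm * ([9,10,11,23] : List (Fin 24)).formPerm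

lemma hp7 : (c7.map step).reverse.prod = p7 := by
  simp only [c7, List.map_cons, List.map_nil, List.reverse_cons, List.reverse_nil,
    List.nil_append, List.cons_append, List.prod_cons, List.prod_nil, List.prod_append,
    mul_one, one_mul, hs0, hs2, hs16, hs23, hs24, hs25]
  decide

def c8 : List (Fin 6 × Fin 6 × Fin 6 × Fin 6) := [(0,0,0,0),(0,0,0,0),(0,0,0,0),(0,0,0,5),(0,5,3,4),(0,0,0,0),(0,0,0,0),(0,0,0,0),(0,0,3,3),(0,0,0,0),(0,0,0,0),(0,0,0,0),(5,0,1,0),(0,0,0,0),(0,0,0,0),(0,0,0,0)]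

def p8 : Equiv.Perm (Fin 24) := ([0,6,7,8,2,1] : List (Fin 24)).formPerm * ([3,4,5,11,10,9] : List (Fin 24)).formPerm * ([12,15,16,17,23,13,18,19,20,14] : List (Fin 24)).formPerm

lemma hp8 : (c8.map step).reverse.prod = p8 := by
  simp only [c8, List.map_cons, List.map_nil, List.reverse_cons, List.reverse_nil,
    List.nil_append, List.cons_append, List.prod_cons, List.prod_nil, List.prod_append,
    mul_one, one_mul, hs0, hs1, hs13, hs26, hs27]
  decide

def c9 : List (Fin 6 × Fin 6 × Fin 6 × Fin 6) := [(1,0,5,5),(0,0,0,0),(0,0,0,0),(0,0,0,1),(0,0,0,0),(0,0,0,0),(0,5,0,0),(0,0,0,0),(0,1,4,3),(0,0,0,0),(0,0,0,0),(0,0,0,0),(0,1,2,1),(0,0,0,1),(0,0,0,0),(0,0,0,0)]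

def p9 : Equiv.Perm (Fin 24) := ([0,1,2,8,7,6] : List (Fin 24)).formPerm * ([3,9,10,13,19,18,12,20,23,15,14,16,21,22,17,11,5,4] : List (Fin 24)).formPerm

lemma hp9 : (c9.map step).reverse.prod = p9 := by
  simp only [c9, List.map_cons, List.map_nil, List.reverse_cons, List.reverse_nil,
    List.nil_append, List.cons_append, List.prod_cons, List.prod_nil, List.prod_append,
    mul_one, one_mul, hs0, hs3, hs6, hs28, hs29, hs30]
  decide

def c10 : List (Fin 6 × Fin 6 × Fin 6 × Fin 6) := [(0,0,0,0),(0,5,5,4),(0,0,0,0),(2,1,3,3),(0,0,0,0),(0,0,0,0),(0,0,0,0),(2,2,3,4),(0,0,0,0),(0,0,0,0),(0,0,0,0),(2,3,0,1),(0,0,0,0),(0,1,1,1),(0,0,0,0),(0,0,0,0)]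

def p10 : Equiv.Perm (Fin 24) := ([9,10,13,22,23] : List (Fin 24)).formPerm * ([11,12,14,21] : List (Fin 24)).formPerm

lemma hp10 : (c10.map step).reverse.prod = p10 := by
  simp only [c10, List.map_cons, List.map_nil, List.reverse_cons, List.reverse_nil,
    List.nil_append, List.cons_append, List.prod_cons, List.prod_nil, List.prod_append,
    mul_one, one_mul, hs0, hs16, hs31, hs32, hs33, hs34]
  decide

def c11 : List (Fin 6 × Fin 6 × Fin 6 × Fin 6) := [(0,0,0,0),(0,0,0,1),(0,0,0,0),(0,0,0,0),(0,0,0,0),(3,3,0,0),(2,2,0,0),(0,0,0,0),(0,0,0,0),(3,2,0,1),(0,1,3,2),(0,1,1,0),(0,0,0,0),(0,0,0,0),(0,5,3,3),(0,1,0,1)]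

def p11 : Equiv.Perm (Fin 24) := ([8,9,21,20,22,11] : List (Fin 24)).formPerm * ([10,16] : List (Fin 24)).formPerm * ([12,15,17,19,14,18,23] : List (Fin 24)).formPerm

lemma hp11 : (c11.map step).reverse.prod = p11 := by
  simp only [c11, List.map_cons, List.map_nil, List.reverse_cons, List.reverse_nil,
    List.nil_append, List.cons_append, List.prod_cons, List.prod_nil, List.prod_append,
    mul_one, one_mul, hs0, hs3, hs5, hs23, hs35, hs36, hs37, hs38, hs39]
  decide

def c12 : List (Fin 6 × Fin 6 × Fin 6 × Fin 6) := [(0,0,0,0),(0,0,0,0),(0,0,0,0),(5,4,1,2),(0,1,0,0),(0,0,0,0),(0,0,0,0),(1,1,2,1),(0,0,0,0),(0,0,0,0),(0,0,0,0),(0,1,3,3),(0,0,0,0),(0,0,0,0),(0,0,0,0),(0,1,4,4)]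

def p12 : Equiv.Perm (Fin 24) := ([3,16,5] : List (Fin 24)).formPerm * ([4,17,15] : List (Fin 24)).formPerm * ([6,20,19,18,7,14,12,8] : List (Fin 24)).formPerm * ([13,21,22,23] : List (Fin 24)).formPerm

lemma hp12 : (c12.map step).reverse.prod = p12 := by
  simp only [c12, List.map_cons, List.map_nil, List.reverse_cons, List.reverse_nil,
    List.nil_append, List.cons_append, List.prod_cons, List.prod_nil, List.prod_append,
    mul_one, one_mul, hs0, hs10, hs12, hs40, hs41, hs42]
  decide

def c13 : List (Fin 6 × Fin 6 × Fin 6 × Fin 6) := [(0,0,0,0),(0,0,0,0),(0,5,0,0),(0,0,2,1),(0,0,0,0),(0,5,2,3),(0,0,0,0),(0,1,4,3),(0,0,0,0),(0,0,0,0),(0,5,4,3),(1,0,1,0),(5,4,2,2),(2,3,3,3),(0,0,0,0),(4,3,3,2)]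

def p13 : Equiv.Perm (Fin 24) := ([1,14,3,7,2,13,16,5,22,19] : List (Fin 24)).formPerm * ([4,11,9,6,18,10,12,15,21,23,20] : List (Fin 24)).formPerm * ([8,17] : List (Fin 24)).formPerm

lemma hp13 : (c13.map step).reverse.prod = p13 := by
  simp only [c13, List.map_cons, List.map_nil, List.reverse_cons, List.reverse_nil,
    List.nil_append, List.cons_append, List.prod_cons, List.prod_nil, List.prod_append,
    mul_one, one_mul, hs0, hs6, hs7, hs29, hs43, hs44, hs45, hs46, hs47, hs48]
  decide

def c14 : List (Fin 6 × Fin 6 × Fin 6 × Fin 6) := [(0,0,0,0),(2,2,4,4),(0,0,0,0),(0,0,0,0)]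

def p14 : Equiv.Perm (Fin 24) := ([0,2,13] : List (Fin 24)).formPerm * ([1,12,14] : List (Fin 24)).formPerm * ([3,7,5] : List (Fin 24)).formPerm * ([4,6,8] : List (Fin 24)).formPerm * ([9,11,22] : List (Fin 24)).formPerm * ([10,21,23] : List (Fin 24)).formPerm * ([15,17,19] : List (Fin 24)).formPerm * ([16,20,18] : List (Fin 24)).formPerm

lemma hp14 : (c14.map step).reverse.prod = p14 := by
  simp only [c14, List.map_cons, List.map_nil, List.reverse_cons, List.reverse_nil,
    List.nil_append, List.cons_append, List.prod_cons, List.prod_nil, List.prod_append,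
    mul_one, one_mul, hs0, hs49]
  decide

def wdata : List (Fin 6 × Fin 6 × Fin 6 × Fin 6) := c1 ++ (c2 ++ (c3 ++ (c4 ++ (c5 ++ (c6 ++ (c7 ++ (c8 ++ (c9 ++ (c10 ++ (c11 ++ (c12 ++ (c13 ++ c14))))))))))))

def condB (x : Fin 6 × Fin 6 × Fin 6 × Fin 6) : Bool :=
  (((x.1.val+6-x.2.1.val)%6 == 0) || ((x.1.val+6-x.2.1.val)%6 == 1) ||
   ((x.1.val+6-x.2.1.val)%6 == 5)) &&
  (((x.2.2.1.val+6-x.2.2.2.val)%6 == 0) || ((x.2.2.1.val+6-x.2.2.2.val)%6 == 1) ||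
   ((x.2.2.1.val+6-x.2.2.2.val)%6 == 5))

lemma hall : wdata.all condB = true := by rfl

lemma hCN : ∀ x ∈ wdata,
    (((x.1 : ℕ) + 6 - (x.2.1 : ℕ)) % 6 = 0 ∨ ((x.1 : ℕ) + 6 - (x.2.1 : ℕ)) % 6 = 1 ∨
     ((x.1 : ℕ) + 6 - (x.2.1 : ℕ)) % 6 = 5) ∧
    (((x.2.2.1 : ℕ) + 6 - (x.2.2.2 : ℕ)) % 6 = 0 ∨ ((x.2.2.1 : ℕ) + 6 - (x.2.2.2 : ℕ)) % 6 = 1 ∨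
     ((x.2.2.1 : ℕ) + 6 - (x.2.2.2 : ℕ)) % 6 = 5) := by
  intro x hx
  have h := List.all_eq_true.mp hall x hx
  simp only [condB, Bool.and_eq_true, Bool.or_eq_true, beq_iff_eq] at h
  tauto

lemma wprod : (wdata.map step).reverse.prod = Equiv.swap (0 : Fin 24) 2 := by
  show (((c1 ++ (c2 ++ (c3 ++ (c4 ++ (c5 ++ (c6 ++ (c7 ++ (c8 ++ (c9 ++ (c10 ++ (c11 ++ (c12 ++ (c13 ++ c14))))))))))))).map step).reverse.prod) = _
  simp only [List.map_append, List.reverse_append, List.prod_append, hp1, hp2, hp3, hp4, hp5, hp6, hp7, hp8, hp9, hp10, hp11, hp12, hp13, hp14]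
  decide

/-- The transposition sequence G: a 212-step word in S realizing the swap (0 2). -/
theorem swap02_realizable :
    (∃ l : List (Equiv.Perm (Fin 24)),
      (∀ g ∈ l, g ∈ S) ∧ l.length = 212 ∧ l.reverse.prod = Equiv.swap (0 : Fin 24) 2) ∧
    Equiv.swap (0 : Fin 24) 2 ∈ Submonoid.closure S := by
  have hmem : ∀ g ∈ wdata.map step, g ∈ S := by
    intro g hg
    rw [List.mem_map] at hg
    obtain ⟨x, hx, rfl⟩ := hg
    exact ⟨x.1, x.2.1, x.2.2.1, x.2.2.2,
      imp1 _ _ (hCN x hx).1, imp1 _ _ (hCN x hx).2, rfl⟩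
  have hlen : (wdata.map step).length = 212 := by
    rw [List.length_map]; rfl
  refine ⟨⟨wdata.map step, hmem, hlen, wprod⟩, ?_⟩
  rw [← wprod]
  exact list_prod_mem (fun g hg => Submonoid.subset_closure
    (hmem g (List.mem_reverse.mp hg)))

end Volleyball
end

section
/- Any rearrangement of the players within quadrant A is realizable by the chain: every permutation σ ∈ Equiv.Perm (Fin 24) that fixes every position outside {0,1,2,6,7,8} belongs to Submonoid.closure S. -/
namespace Equiv.Perm

open Subgroup

variable {α : Type*} [DecidableEq α] {H : Subgroup (Perm α)}

theorem swap_pow_apply_pow_apply_mem {c : Perm α} (hc : c ∈ H) {x : α}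
    (hx : swap x (c x) ∈ H) (i j : ℕ) : swap ((c ^ i) x) ((c ^ j) x) ∈ H := by
  have hx_pow : ∀ n : ℕ, swap x ((c ^ n) x) ∈ H := by
    intro n
    induction n with
    | zero =>
      rw [pow_zero, one_apply, swap_self]
      exact H.one_mem
    | succ n ih =>
      have step : swap ((c ^ n) x) ((c ^ (n + 1)) x) ∈ H := by
        rw [pow_succ, mul_apply, swap_apply_apply]
        exact mul_mem (mul_mem (pow_mem hc n) hx) (inv_mem (pow_mem hc n))
      exact SubmonoidClass.swap_mem_trans H ih step
  exact SubmonoidClass.swap_mem_trans H (swap_comm x _ ▸ hx_pow i) (hx_pow j)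

theorem mem_of_forall_swap_mem {s : Set α} (hs_fin : s.Finite)
    (hs : ∀ a ∈ s, ∀ b ∈ s, swap a b ∈ H) {σ : Perm α} (hσ : ∀ p ∉ s, σ p = p) : σ ∈ H := by
  let T : Set (Perm α) := {τ | τ ∈ H ∧ τ.IsSwap}
  suffices σ ∈ closure T from closure_le H |>.2 (fun τ hτ => hτ.1) this
  have hsupp : (MulAction.fixedBy α σ)ᶜ.Finite :=
    hs_fin.subset fun x hx => by_contra fun h => hx (hσ x h)
  refine (mem_closure_isSwap fun τ hτ => hτ.2).2 ⟨hsupp, fun x => ?_⟩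
  by_cases hx : σ x = x
  · rw [hx]; exact MulAction.mem_orbit_self x
  have hx_mem : x ∈ s := by_contra fun h => hx (hσ x h)
  have hσx_mem : σ x ∈ s := by_contra fun h => hx (σ.injective (hσ _ h))
  have hswap : swap x (σ x) ∈ closure T :=
    subset_closure ⟨hs x hx_mem _ hσx_mem, x, σ x, Ne.symm hx, rfl⟩
  exact MulAction.mem_orbit_iff.2 ⟨⟨_, hswap⟩, swap_apply_left x (σ x)⟩

end Equiv.Perm

namespace Volleyball

open Equiv Equiv.Perm Subgroup

theorem E_mem_closure : E ∈ closure S :=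
  subset_closure ⟨0, 0, 0, 0, by decide, by decide, by simp⟩

theorem rA_mem_closure : rA ∈ closure S := by
  have h : E * rA ∈ closure S := subset_closure ⟨1, 0, 0, 0, by decide, by decide, by simp⟩
  simpa using mul_mem (inv_mem E_mem_closure) h

theorem rB_mem_closure : rB ∈ closure S := by
  have h : E * rB ∈ closure S := subset_closure ⟨0, 0, 1, 0, by decide, by decide, by simp⟩
  simpa using mul_mem (inv_mem E_mem_closure) h

set_option maxRecDepth 10000 in
theorem swap_mul_swap_mul_swap_mem_closure :
    swap (3 : Fin 24) 8 * swap 4 7 * swap 5 6 ∈ closure S := by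
  have h : swap (3 : Fin 24) 8 * swap 4 7 * swap 5 6 = E⁻¹ * rB ^ 3 * E := Equiv.ext (by decide)
  rw [h]
  exact mul_mem (mul_mem (inv_mem E_mem_closure) (pow_mem rB_mem_closure 3)) E_mem_closure

set_option maxRecDepth 10000 in
theorem swap_two_eight_mem_closure : swap (2 : Fin 24) 8 ∈ closure S := by
  set u : Perm (Fin 24) := swap 3 8 * swap 4 7 * swap 5 6
  have hu : u ∈ closure S := swap_mul_swap_mul_swap_mem_closure
  have hrA := rA_mem_closure
  have hw : ((u * rA) ^ 3 * rA) ^ 7 = swap 0 8 := Equiv.ext (by decide)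
  have hg : (u * rA ^ 2 * u) 0 = 2 ∧ (u * rA ^ 2 * u) 8 = 8 := by decide
  rw [← hg.1, ← hg.2, swap_apply_apply, ← hw]
  have hg_mem : u * rA ^ 2 * u ∈ closure S := mul_mem (mul_mem hu (pow_mem hrA 2)) hu
  exact mul_mem (mul_mem hg_mem (pow_mem (mul_mem (pow_mem (mul_mem hu hrA) 3) hrA) 7))
    (inv_mem hg_mem)

theorem exists_rA_pow_apply_two_eq {a : Fin 24} (ha : a ∈ ({0, 1, 2, 6, 7, 8} : Set (Fin 24))) :
    ∃ k : ℕ, (rA ^ k) 2 = a := by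
  rcases ha with rfl | rfl | rfl | rfl | rfl | rfl
  exacts [⟨4, by decide⟩, ⟨5, by decide⟩, ⟨0, rfl⟩, ⟨3, by decide⟩, ⟨2, by decide⟩, ⟨1, by decide⟩]

/-- Any permutation fixing every position outside quadrant A = {0,1,2,6,7,8}
belongs to the closure of S. -/
theorem quadrantA_perms_realizable (σ : Equiv.Perm (Fin 24))
    (h : ∀ p : Fin 24, p ∉ ({0, 1, 2, 6, 7, 8} : Set (Fin 24)) → σ p = p) :
    σ ∈ Submonoid.closure S := by
  rw [← closure_toSubmonoid_of_finite, mem_toSubmonoid]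
  refine mem_of_forall_swap_mem (Set.toFinite _) (fun a ha b hb => ?_) h
  obtain ⟨i, rfl⟩ := exists_rA_pow_apply_two_eq ha
  obtain ⟨j, rfl⟩ := exists_rA_pow_apply_two_eq hb
  exact swap_pow_apply_pow_apply_mem rA_mem_closure swap_two_eight_mem_closure i j

end Volleyball
end

section
/- Variation distance for the lazy cyclic walk on 4 quadrants: for every natural number n ≥ 1, (1/2) · ∑_{j=0}^{3} | (∑_{k ∈ Finset.range (n+1), k % 4 = j} Nat.choose n k) / 2^n − 1/4 | = (1/2)^(n/2 + 1), where n/2 denotes the floor ⌊n/2⌋ and the arithmetic is in ℝ. -/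
/-!
The counts `c n j` of subsets of `{1, …, n}` with size `≡ j (mod 4)` obey the walk recursion
`c (n + 1) j = c n j + c n (j - 1)`. For `n ≥ 1` antipodal counts are balanced,
`c n j + c n (j + 2) = 2 ^ (n - 1)`, so two steps of the walk act on the deviation
`c n j - 2 ^ n / 4` from uniform as twice a rotation. Hence the `ℓ¹`-norm of the deviation doubles
every two steps, and from its value `2` at `n = 1, 2` it is `2 ^ ⌈n / 2⌉`.
-/

open Finset

theorem ZMod.sum_univ_four {M : Type*} [AddCommMonoid M] (f : ZMod 4 → M) :
    ∑ j, f j = f 0 + f 1 + f 2 + f 3 :=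
  Fin.sum_univ_four f

theorem ZMod.sum_range_four {M : Type*} [AddCommMonoid M] (f : ZMod 4 → M) :
    ∑ j ∈ range 4, f j = ∑ j, f j := by
  simp [sum_range_succ, ZMod.sum_univ_four]

def cyclicBinomialSum (m n : ℕ) (j : ZMod m) : ℕ :=
  ∑ k ∈ range (n + 1) with ((k : ℕ) : ZMod m) = j, n.choose k

theorem cyclicBinomialSum_succ (m n : ℕ) (j : ZMod m) :
    cyclicBinomialSum m (n + 1) j = cyclicBinomialSum m n j + cyclicBinomialSum m n (j - 1) := by
  simpa [cyclicBinomialSum, sum_filter, eq_sub_iff_add_eq] using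
    sum_choose_succ_mul (R := ℕ) (fun k _ ↦ if (k : ZMod m) = j then 1 else 0) n

theorem sum_cyclicBinomialSum (m n : ℕ) [NeZero m] :
    ∑ j, cyclicBinomialSum m n j = 2 ^ n := by
  simp only [cyclicBinomialSum, sum_fiberwise, Nat.sum_range_choose]

theorem cyclicBinomialSum_four_succ_add_add_two (n : ℕ) (j : ZMod 4) :
    cyclicBinomialSum 4 (n + 1) j + cyclicBinomialSum 4 (n + 1) (j + 2) = 2 ^ n := by
  rw [← sum_cyclicBinomialSum 4 n, ← Equiv.sum_comp (Equiv.addLeft j), ZMod.sum_univ_four,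
    cyclicBinomialSum_succ, cyclicBinomialSum_succ]
  have h1 : j - 1 = j + 3 := by revert j; decide
  have h2 : j + 2 - 1 = j + 1 := by revert j; decide
  simp only [Equiv.coe_addLeft, add_zero, h1, h2]
  ring

theorem cyclicBinomialSum_four_add_three (n : ℕ) (j : ZMod 4) :
    cyclicBinomialSum 4 (n + 3) j = 2 * cyclicBinomialSum 4 (n + 1) (j - 1) + 2 ^ n := by
  have h := cyclicBinomialSum_four_succ_add_add_two n (j - 1 - 1)
  rw [show j - 1 - 1 + 2 = j by ring] at h
  rw [cyclicBinomialSum_succ 4 (n + 2), cyclicBinomialSum_succ 4 (n + 1) j,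
    cyclicBinomialSum_succ 4 (n + 1) (j - 1)]
  omega

noncomputable def quadrantDeviation (n : ℕ) (j : ZMod 4) : ℝ :=
  cyclicBinomialSum 4 n j - 2 ^ n / 4

theorem quadrantDeviation_add_three (n : ℕ) (j : ZMod 4) :
    quadrantDeviation (n + 3) j = 2 * quadrantDeviation (n + 1) (j - 1) := by
  rw [quadrantDeviation, quadrantDeviation, cyclicBinomialSum_four_add_three]
  push_cast
  ring

theorem sum_abs_quadrantDeviation_add_three (n : ℕ) :
    ∑ j, |quadrantDeviation (n + 3) j| = 2 * ∑ j, |quadrantDeviation (n + 1) j| := by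
  simp only [quadrantDeviation_add_three, abs_mul, abs_two, ← mul_sum]
  exact congrArg (2 * ·)
    (Equiv.sum_comp (Equiv.subRight (1 : ZMod 4)) fun j ↦ |quadrantDeviation (n + 1) j|)

theorem sum_abs_quadrantDeviation_succ : ∀ n : ℕ,
    ∑ j, |quadrantDeviation (n + 1) j| = 2 ^ (n / 2 + 1)
  | 0 | 1 => by
    simp +decide [quadrantDeviation, cyclicBinomialSum, ZMod.sum_univ_four, sum_filter,
      sum_range_succ]
    norm_num
  | n + 2 => by
    rw [sum_abs_quadrantDeviation_add_three, sum_abs_quadrantDeviation_succ n,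
      Nat.add_div_right n two_pos, ← pow_succ']

theorem sum_filter_mod_eq_cyclicBinomialSum (m n j : ℕ) (hj : j < m) :
    ∑ k ∈ range (n + 1) with k % m = j, (n.choose k : ℝ) = cyclicBinomialSum m n j := by
  rw [cyclicBinomialSum, Nat.cast_sum]
  refine sum_congr (filter_congr fun k _ ↦ ?_) fun _ _ ↦ rfl
  rw [ZMod.natCast_eq_natCast_iff', Nat.mod_eq_of_lt hj]

/-- Variation distance to uniformity for the lazy cyclic walk on 4 quadrants after n ≥ 1
games equals (1/2)^(⌊n/2⌋ + 1). -/
theorem lazy_cyclic_walk_tv (n : ℕ) (hn : 1 ≤ n) :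
    (1/2 : ℝ) * ∑ j ∈ Finset.range 4,
      |(∑ k ∈ (Finset.range (n+1)).filter (fun k => k % 4 = j), (n.choose k : ℝ)) / 2 ^ n
        - 1/4|
    = (1/2 : ℝ) ^ (n / 2 + 1) := by
  obtain ⟨n, rfl⟩ := Nat.exists_eq_add_of_le' hn
  have hterm : ∀ j ∈ range 4,
      |(∑ k ∈ range (n + 1 + 1) with k % 4 = j, ((n + 1).choose k : ℝ)) / 2 ^ (n + 1) - 1 / 4|
        = |quadrantDeviation (n + 1) j| / 2 ^ (n + 1) := by
    intro j hj
    have hdev : (cyclicBinomialSum 4 (n + 1) j : ℝ) / 2 ^ (n + 1) - 1 / 4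
        = quadrantDeviation (n + 1) j / 2 ^ (n + 1) := by
      rw [quadrantDeviation]
      field_simp
    rw [sum_filter_mod_eq_cyclicBinomialSum 4 _ j (mem_range.mp hj), hdev, abs_div,
      abs_of_pos (by positivity : (0 : ℝ) < 2 ^ (n + 1))]
  rw [sum_congr rfl hterm, ← sum_div, ZMod.sum_range_four fun j ↦ |quadrantDeviation (n + 1) j|,
    sum_abs_quadrantDeviation_succ, one_div_pow]
  field_simp
  rw [← pow_add, ← pow_succ']
  congr 1
  omega
end

section
/- Random teams, never opponents over seven games: for any two fixed distinct players a, b : Fin 24, the number of 7-tuples of permutations f : Fin 7 → Equiv.Perm (Fin 24) (independent uniformly random assignments for 7 games) such that for every i, q (f i b) ≠ opp (q (f i a)) satisfies 23^7 · |{f : Fin 7 → Equiv.Perm (Fin 24) | ∀ i, q (f i b) ≠ opp (q (f i a))}| = 17^7 · (24!)^7; that is, with independent uniformly random team assignments in each of 7 games, the probability that player b is never on the team opposing player a equals (17/23)^7. -/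
/-!
Map a permutation `g` to the pair of positions `(g a, g b)`. Since permutations act
doubly transitively, left multiplication identifies all fibres over off-diagonal pairs, so
`(g a, g b)` is uniform among the `24 · 23` ordered pairs of distinct positions. Of these,
`24 · 17` are admissible: wherever `a` stands, `b` must avoid `a`'s own position and the six
positions of the opposing quadrant. The seven games are independent, which raises the
single-game ratio `17 / 23` to the seventh power.
-/

namespace Volleyball

/-- The quadrant of each position: A↦0, B↦1, C↦2, D↦3. -/
def q : Fin 24 → Fin 4 :=
  ![0,0,0,1,1,1,0,0,0,1,1,1,2,2,2,3,3,3,2,2,2,3,3,3]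

/-- The opposing quadrant: A↔C and B↔D. -/
def opp : Fin 4 → Fin 4 := ![2,3,0,1]

open Finset Equiv

theorem exists_perm_apply_eq_pair {α : Type*} {x y x' y' : α} (h : x ≠ y) (h' : x' ≠ y') :
    ∃ τ : Perm α, τ x = x' ∧ τ y = y' :=
  (MulAction.is_two_pretransitive_iff.mp (Perm.isMultiplyPretransitive α 2)) h h'

section PermPair

variable {α : Type*} [Fintype α] [DecidableEq α] {a b : α}

theorem card_filter_perm_apply_pair_eq_of_ne {p p' : α × α} (hp : p.1 ≠ p.2) (hp' : p'.1 ≠ p'.2) :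
    #{g : Perm α | (g a, g b) = p} = #{g : Perm α | (g a, g b) = p'} := by
  obtain ⟨τ, hτ₁, hτ₂⟩ := exists_perm_apply_eq_pair hp hp'
  refine card_bij' (fun g _ => τ * g) (fun g _ => τ⁻¹ * g) ?_ ?_ (by simp) (by simp)
  · simp only [mem_filter, mem_univ, true_and]
    rintro g rfl
    exact Prod.ext hτ₁ hτ₂
  · simp only [mem_filter, mem_univ, true_and]
    rintro g rfl
    exact Prod.ext (τ.symm_apply_eq.mpr hτ₁.symm) (τ.symm_apply_eq.mpr hτ₂.symm)

theorem card_filter_perm_apply_pair (hab : a ≠ b) (P : α × α → Prop) [DecidablePred P] :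
    #{g : Perm α | P (g a, g b)} =
      #(univ.offDiag.filter P) * #{g : Perm α | (g a, g b) = (a, b)} := by
  have hmaps : ∀ g ∈ ({g : Perm α | P (g a, g b)} : Finset _),
      (g a, g b) ∈ univ.offDiag.filter P := fun g hg => by
    simp_all [g.injective.ne hab]
  rw [card_eq_sum_card_fiberwise hmaps, ← smul_eq_mul, ← sum_const]
  refine sum_congr rfl fun p hp => ?_
  obtain ⟨hne, hP⟩ := by simpa using hp
  rw [filter_filter, ← card_filter_perm_apply_pair_eq_of_ne hne hab]
  congr 1
  ext g
  simp only [mem_filter, mem_univ, true_and, and_iff_right_iff_imp]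
  rintro rfl
  exact hP

theorem card_filter_perm_apply_pair_mul (hab : a ≠ b) (P : α × α → Prop) [DecidablePred P] :
    #{g : Perm α | P (g a, g b)} * #(univ.offDiag : Finset (α × α)) =
      #(univ.offDiag.filter P) * (Fintype.card α).factorial := by
  have htotal := card_filter_perm_apply_pair hab (fun _ => True)
  simp only [filter_true, card_univ, Fintype.card_perm] at htotal
  rw [htotal, card_filter_perm_apply_pair hab P]
  ring

end PermPair

theorem card_filter_forall_apply {ι β : Type*} [Fintype ι] [DecidableEq ι] [Fintype β]
    (P : β → Prop) [DecidablePred P] [DecidablePred fun f : ι → β => ∀ i, P (f i)] :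
    #{f : ι → β | ∀ i, P (f i)} = #{x : β | P x} ^ Fintype.card ι := by
  have : ({f : ι → β | ∀ i, P (f i)} : Finset _) = Fintype.piFinset fun _ => {x | P x} := by
    ext f
    simp [Fintype.mem_piFinset]
  rw [this, Fintype.card_piFinset, prod_const, card_univ]

set_option maxRecDepth 4000 in
theorem card_never_opponents_one_game (a b : Fin 24) (hab : a ≠ b) :
    23 * #{g : Perm (Fin 24) | q (g b) ≠ opp (q (g a))} = 17 * Nat.factorial 24 := by
  have h := card_filter_perm_apply_pair_mul hab fun p : Fin 24 × Fin 24 => q p.2 ≠ opp (q p.1)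
  have hpairs : #(univ.offDiag : Finset (Fin 24 × Fin 24)) = 24 * 23 := by
    simp [offDiag_card]
  have hgood : #((univ.offDiag : Finset (Fin 24 × Fin 24)).filter
      fun p => q p.2 ≠ opp (q p.1)) = 24 * 17 := by
    decide
  rw [hpairs, hgood, Fintype.card_fin] at h
  linarith

/-- With independent uniformly random team assignments in each of 7 games, the probability
that player b is never on the team opposing player a equals (17/23)^7. -/
theorem random_never_opponents (a b : Fin 24) (hab : a ≠ b) :
    23 ^ 7 * (Finset.univ.filter
        (fun f : Fin 7 → Equiv.Perm (Fin 24) =>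
          ∀ i, q (f i b) ≠ opp (q (f i a)))).card =
      17 ^ 7 * (Nat.factorial 24) ^ 7 := by
  rw [card_filter_forall_apply fun g : Perm (Fin 24) => q (g b) ≠ opp (q (g a)),
    Fintype.card_fin, ← mul_pow, card_never_opponents_one_game a b hab, mul_pow]

end Volleyball
end

section
/- Random teams, never teammates over seven games: for any two fixed distinct players a, b : Fin 24, the number of 7-tuples of permutations f : Fin 7 → Equiv.Perm (Fin 24) such that for every i, q (f i b) ≠ q (f i a) satisfies 23^7 · |{f : Fin 7 → Equiv.Perm (Fin 24) | ∀ i, q (f i b) ≠ q (f i a)}| = 18^7 · (24!)^7; that is, with independent uniformly random team assignments in each of 7 games, the probability that player b is never on the same team as player a equals (18/23)^7. -/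
open Finset

namespace Equiv.Perm

variable {α : Type*} [DecidableEq α]

theorem exists_apply_eq_and_apply_eq {a b x y : α} (hab : a ≠ b) (hxy : x ≠ y) :
    ∃ τ : Perm α, τ a = x ∧ τ b = y := by
  have hbx : swap a x b ≠ x := fun h =>
    hab ((swap a x).injective (h.trans (swap_apply_left a x).symm)).symm
  refine ⟨swap (swap a x b) y * swap a x, ?_, swap_apply_left _ _⟩
  rw [mul_apply, swap_apply_left, swap_apply_of_ne_of_ne hbx.symm hxy]

variable [Fintype α] {a b : α}

theorem card_filter_apply_pair_eq (hab : a ≠ b) {p : α × α} (hp : p.1 ≠ p.2) :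
    #{σ : Perm α | (σ a, σ b) = p} = #{σ : Perm α | (σ a, σ b) = (a, b)} := by
  obtain ⟨τ, hτa, hτb⟩ := exists_apply_eq_and_apply_eq hab hp
  refine (card_equiv (Equiv.mulLeft τ) fun σ => ?_).symm
  simp [← hτa, ← hτb, Prod.ext_iff]

theorem card_filter_apply_pair_mem (hab : a ≠ b) {P : Finset (α × α)}
    (hP : ∀ p ∈ P, p.1 ≠ p.2) :
    #{σ : Perm α | (σ a, σ b) ∈ P} = #P * #{σ : Perm α | (σ a, σ b) = (a, b)} := by
  rw [card_eq_sum_card_fiberwise (s := {σ : Perm α | (σ a, σ b) ∈ P})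
    (f := fun σ => (σ a, σ b)) fun σ hσ => (mem_filter.1 hσ).2]
  refine sum_const_nat fun p hp => ?_
  rw [filter_filter, ← card_filter_apply_pair_eq hab (hP p hp)]
  exact congrArg card <| filter_congr fun σ _ => and_iff_right_of_imp fun h => h ▸ hp

theorem card_filter_apply_pair_mem_mul (hab : a ≠ b) {P : Finset (α × α)}
    (hP : ∀ p ∈ P, p.1 ≠ p.2) :
    #{σ : Perm α | (σ a, σ b) ∈ P} * #(univ : Finset α).offDiag =
      #P * (Fintype.card α).factorial := by
  have hfactorial := card_filter_apply_pair_mem hab (P := univ.offDiag)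
    fun p hp => (mem_offDiag.1 hp).2.2
  simp only [mem_offDiag, mem_univ, true_and, ne_eq, EmbeddingLike.apply_eq_iff_eq, hab,
    not_false_eq_true, filter_true, card_univ, Fintype.card_perm] at hfactorial
  rw [card_filter_apply_pair_mem hab hP, hfactorial]
  ring

end Equiv.Perm

theorem Fintype.card_filter_forall_apply {ι β : Type*} [Fintype ι] [DecidableEq ι] [Fintype β]
    (p : β → Prop) [DecidablePred p] [DecidablePred fun f : ι → β => ∀ i, p (f i)] :
    #{f : ι → β | ∀ i, p (f i)} = #{x : β | p x} ^ Fintype.card ι := by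
  rw [← card_univ (α := ι), ← prod_const, ← Fintype.card_piFinset]
  congr 1
  ext f
  simp [Fintype.mem_piFinset]

namespace Volleyball

set_option maxRecDepth 40000 in
theorem card_filter_quadrant_ne : #{p : Fin 24 × Fin 24 | q p.2 ≠ q p.1} = 432 := by decide

theorem card_filter_perm_quadrant_ne {a b : Fin 24} (hab : a ≠ b) :
    23 * #{σ : Equiv.Perm (Fin 24) | q (σ b) ≠ q (σ a)} = 18 * Nat.factorial 24 := by
  have h := Equiv.Perm.card_filter_apply_pair_mem_mul hab
    (P := {p : Fin 24 × Fin 24 | q p.2 ≠ q p.1}) fun p hp hp' => (mem_filter.1 hp).2 (hp' ▸ rfl)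
  simp only [mem_filter, mem_univ, true_and, offDiag_card, card_univ, Fintype.card_fin,
    card_filter_quadrant_ne] at h
  omega

/-- With independent uniformly random team assignments in each of 7 games, the probability
that player b is never on the same team as player a equals (18/23)^7. -/
theorem random_never_teammates (a b : Fin 24) (hab : a ≠ b) :
    23 ^ 7 * (Finset.univ.filter
        (fun f : Fin 7 → Equiv.Perm (Fin 24) =>
          ∀ i, q (f i b) ≠ q (f i a))).card =
      18 ^ 7 * (Nat.factorial 24) ^ 7 := by
  rw [Fintype.card_filter_forall_apply fun σ : Equiv.Perm (Fin 24) => q (σ b) ≠ q (σ a),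
    Fintype.card_fin, ← mul_pow, card_filter_perm_quadrant_ne hab, mul_pow]

end Volleyball
end

section
/- Geometric separation parameter for teammates: let F = {3, 4, 5} ⊆ ZMod 6 (the front-row positions within a team whose 6 positions are labeled cyclically by ZMod 6). For every i : ZMod 6 and every d ∈ {1, 2, 3} (a natural number, coerced into ZMod 6), the number of rotation amounts x ∈ ZMod 6 such that exactly one of i + x and i + d + x lies in F equals 2·d. (Hence two teammates at cyclic distance d = 1, 2, 3 are separated at the end of a game, whose rotation amount is uniform on ZMod 6, with probability d/3.) -/
open Finset

theorem Finset.card_filter_add_left {G : Type*} [AddGroup G] [Fintype G] (p : G → Prop)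
    [DecidablePred p] (a : G) : #{x | p (a + x)} = #{x | p x} :=
  card_equiv (Equiv.addLeft a) (by simp)

/-- Teammates at cyclic distance d ∈ {1,2,3} are separated (exactly one of them lands in
the front row F = {3,4,5}) by exactly 2·d of the 6 possible rotation amounts. -/
theorem separation_count (i : ZMod 6) (d : ℕ) (hd : d ∈ ({1, 2, 3} : Finset ℕ)) :
    (Finset.univ.filter (fun x : ZMod 6 =>
        Xor (i + x ∈ ({3, 4, 5} : Finset (ZMod 6)))
             (i + (d : ZMod 6) + x ∈ ({3, 4, 5} : Finset (ZMod 6))))).card = 2 * d := by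
  simp_rw [add_right_comm i (d : ZMod 6)]
  refine (card_filter_add_left
    (fun y => Xor (y ∈ ({3, 4, 5} : Finset (ZMod 6))) (y + d ∈ ({3, 4, 5} : Finset (ZMod 6)))) i).trans ?_
  fin_cases hd <;> decide
end

section
/- A single player's quadrant performs the lazy cyclic walk: define the weight w : ZMod 6 × ZMod 6 → ℝ by w (x, y) = 1/12 if y = x, 1/24 if y = x + 1 or y = x − 1, and 0 otherwise (so ∑_{(x,y)} w (x, y) = 1). For every position p : Fin 24, ∑ over (x₁, x₂, x₃, x₄) ∈ (ZMod 6)⁴ of w (x₁, x₂) · w (x₃, x₄) · (indicator that q (g p) = q p) = 1/2, and ∑ over (x₁, x₂, x₃, x₄) of w (x₁, x₂) · w (x₃, x₄) · (indicator that q (g p) = nxt (q p)) = 1/2, where g = E ∘ r_A^{x₁} ∘ r_C^{x₂} ∘ r_B^{x₃} ∘ r_D^{x₄} (rotation exponents taken via any representatives in {0,…,5} of x₁, x₂, x₃, x₄) and nxt : Fin 4 → Fin 4 is given by nxt 0 = 1, nxt 1 = 3, nxt 3 = 2, nxt 2 = 0 (the cyclic order A→B→D→C→A). That is, under one step of the chain,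 the occupant of any fixed position stays in its quadrant with probability 1/2 and moves to the next quadrant with probability 1/2. -/
namespace Volleyball

/-- The next quadrant in the cyclic order A→B→D→C→A. -/
def nxt : Fin 4 → Fin 4 := ![1, 3, 0, 2]

/-- The weight of a court's pair of rotation amounts: the first is uniform on ZMod 6 and
the second equals it plus −1, 0, +1 with probabilities 1/4, 1/2, 1/4. -/
noncomputable def w (p : ZMod 6 × ZMod 6) : ℝ :=
  if p.2 = p.1 then 1/12 else if p.2 = p.1 + 1 ∨ p.2 = p.1 - 1 then 1/24 else 0

/-!
The occupant of `p` is moved only by the rotation of its own quadrant, by that quadrant's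
amount, and then by `E`. Since `w (a, b)` depends only on `b - a`, its row and column sums are
all `1/6`, so each single amount is uniformly distributed on `ZMod 6`. Of the six positions on a
quadrant's cycle, three lie in the back row, which `E` fixes, and three in the front row, which
`E` sends to the next quadrant: each outcome has probability `3/6`.
-/

open Finset

section Averaging

variable {α R : Type*} [Fintype α] [CommSemiring R]

theorem sum_four_weight_mul_left (μ : α × α → R) (hμ : ∑ a, ∑ b, μ (a, b) = 1)
    (F : α → α → R) :
    ∑ x₁, ∑ x₂, ∑ x₃, ∑ x₄, μ (x₁, x₂) * μ (x₃, x₄) * F x₁ x₂ =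
      ∑ x₁, ∑ x₂, μ (x₁, x₂) * F x₁ x₂ := by
  simp only [mul_right_comm _ _ (F _ _), ← mul_sum, hμ, mul_one]

theorem sum_four_weight_mul_right (μ : α × α → R) (hμ : ∑ a, ∑ b, μ (a, b) = 1)
    (F : α → α → R) :
    ∑ x₁, ∑ x₂, ∑ x₃, ∑ x₄, μ (x₁, x₂) * μ (x₃, x₄) * F x₃ x₄ =
      ∑ x₃, ∑ x₄, μ (x₃, x₄) * F x₃ x₄ := by
  simp only [mul_assoc, ← mul_sum, ← sum_mul, hμ, one_mul]

theorem sum_sum_mul_fst (μ : α × α → R) {c : R} (hμ : ∀ a, ∑ b, μ (a, b) = c)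
    (f : α → R) :
    ∑ a, ∑ b, μ (a, b) * f a = c * ∑ a, f a := by
  simp only [← sum_mul, hμ, mul_sum]

theorem sum_sum_mul_snd (μ : α × α → R) {c : R} (hμ : ∀ b, ∑ a, μ (a, b) = c)
    (f : α → R) :
    ∑ a, ∑ b, μ (a, b) * f b = c * ∑ b, f b := by
  rw [sum_comm]
  exact sum_sum_mul_fst (fun p => μ p.swap) hμ f

end Averaging

theorem w_eq_w_zero_sub (a b : ZMod 6) : w (a, b) = w (0, b - a) := by
  have h : ∀ a b : ZMod 6, (b = a ↔ b - a = 0) ∧ (b = a + 1 ↔ b - a = 0 + 1) ∧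
      (b = a - 1 ↔ b - a = 0 - 1) := by decide
  simp only [w, (h a b).1, (h a b).2.1, (h a b).2.2]

theorem sum_w_zero : ∑ c, w (0, c) = 1 / 6 := by
  simp +decide [Fin.sum_univ_six, ZMod, w]
  norm_num

theorem sum_w_left (a : ZMod 6) : ∑ b, w (a, b) = 1 / 6 := by
  simp only [w_eq_w_zero_sub a]
  exact ((Equiv.subRight a).sum_comp fun c => w (0, c)).trans sum_w_zero

theorem sum_w_right (b : ZMod 6) : ∑ a, w (a, b) = 1 / 6 := by
  simp only [w_eq_w_zero_sub _ b]
  exact ((Equiv.subLeft b).sum_comp fun c => w (0, c)).trans sum_w_zero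

theorem sum_w : ∑ a, ∑ b, w (a, b) = 1 := by
  simp only [sum_w_left, sum_const, card_univ, ZMod.card, nsmul_eq_mul]
  norm_num

def rot : Fin 4 → Equiv.Perm (Fin 24) := ![rA, rB, rC, rD]

theorem rot_apply_of_q_ne : ∀ (Q : Fin 4) (z : Fin 24), q z ≠ Q → rot Q z = z := by decide

theorem q_rot_apply : ∀ (Q : Fin 4) (z : Fin 24), q (rot Q z) = q z := by decide

theorem rot_pow_apply_of_q_ne {Q : Fin 4} {z : Fin 24} (h : q z ≠ Q) (n : ℕ) :
    (rot Q ^ n) z = z :=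
  Equiv.Perm.pow_apply_eq_self_of_apply_eq_self (rot_apply_of_q_ne Q z h) n

theorem q_rot_pow_apply (Q : Fin 4) (n : ℕ) (z : Fin 24) : q ((rot Q ^ n) z) = q z := by
  rw [Equiv.Perm.coe_pow]
  exact congrFun (Function.iterate_invariant (funext (q_rot_apply Q)) n) z

/-- `x₁, x₂` are the rotation amounts of quadrants A and C, `x₃, x₄` those of B and D. -/
def amount (x₁ x₂ x₃ x₄ : ZMod 6) : Fin 4 → ZMod 6 := ![x₁, x₃, x₂, x₄]

theorem step_apply (x₁ x₂ x₃ x₄ : ZMod 6) (p : Fin 24) :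
    (E * rA ^ x₁.val * rC ^ x₂.val * rB ^ x₃.val * rD ^ x₄.val) p =
      E ((rot (q p) ^ (amount x₁ x₂ x₃ x₄ (q p)).val) p) := by
  change (E * rot 0 ^ x₁.val * rot 2 ^ x₂.val * rot 1 ^ x₃.val * rot 3 ^ x₄.val) p = _
  generalize hQ : q p = Q
  fin_cases Q <;>
    simp +decide only [Equiv.Perm.mul_apply, rot_pow_apply_of_q_ne, q_rot_pow_apply, hQ] <;>
    rfl

theorem sum_w_mul_w_mul_amount (f : ZMod 6 → ℝ) (Q : Fin 4) :
    ∑ x₁, ∑ x₂, ∑ x₃, ∑ x₄, w (x₁, x₂) * w (x₃, x₄) * f (amount x₁ x₂ x₃ x₄ Q) =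
      (∑ k, f k) / 6 := by
  rw [div_eq_inv_mul, ← one_div]
  fin_cases Q
  · exact (sum_four_weight_mul_left w sum_w fun a _ => f a).trans
      (sum_sum_mul_fst w sum_w_left f)
  · exact (sum_four_weight_mul_right w sum_w fun a _ => f a).trans
      (sum_sum_mul_fst w sum_w_left f)
  · exact (sum_four_weight_mul_left w sum_w fun _ b => f b).trans
      (sum_sum_mul_snd w sum_w_right f)
  · exact (sum_four_weight_mul_right w sum_w fun _ b => f b).trans
      (sum_sum_mul_snd w sum_w_right f)

theorem card_q_E_rot_pow_eq_three : ∀ p : Fin 24,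
    #{k : ZMod 6 | q (E ((rot (q p) ^ k.val) p)) = q p} = 3 ∧
      #{k : ZMod 6 | q (E ((rot (q p) ^ k.val) p)) = nxt (q p)} = 3 := by
  decide

theorem sum_step_indicator (p : Fin 24) (t : Fin 4) :
    ∑ x₁ : ZMod 6, ∑ x₂ : ZMod 6, ∑ x₃ : ZMod 6, ∑ x₄ : ZMod 6,
        w (x₁, x₂) * w (x₃, x₄) *
          (if q ((E * rA ^ x₁.val * rC ^ x₂.val * rB ^ x₃.val * rD ^ x₄.val) p) = t
           then 1 else 0) =
      #{k : ZMod 6 | q (E ((rot (q p) ^ k.val) p)) = t} / 6 := by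
  simp only [step_apply]
  rw [sum_w_mul_w_mul_amount (fun k => if q (E ((rot (q p) ^ k.val) p)) = t then 1 else 0),
    sum_boole]

/-- In one step of the chain, the occupant of any fixed position stays in its quadrant
with probability 1/2 and moves to the next quadrant with probability 1/2. -/
theorem single_player_lazy_walk (p : Fin 24) :
    (∑ x₁ : ZMod 6, ∑ x₂ : ZMod 6, ∑ x₃ : ZMod 6, ∑ x₄ : ZMod 6,
        w (x₁, x₂) * w (x₃, x₄) *
          (if q ((E * rA ^ x₁.val * rC ^ x₂.val * rB ^ x₃.val * rD ^ x₄.val) p) = q p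
           then 1 else 0) = (1/2 : ℝ)) ∧
    (∑ x₁ : ZMod 6, ∑ x₂ : ZMod 6, ∑ x₃ : ZMod 6, ∑ x₄ : ZMod 6,
        w (x₁, x₂) * w (x₃, x₄) *
          (if q ((E * rA ^ x₁.val * rC ^ x₂.val * rB ^ x₃.val * rD ^ x₄.val) p) = nxt (q p)
           then 1 else 0) = (1/2 : ℝ)) := by
  rw [sum_step_indicator, sum_step_indicator, (card_q_E_rot_pow_eq_three p).1,
    (card_q_E_rot_pow_eq_three p).2]
  norm_num

end Volleyball
end
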